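/- arXiv:2508.01532 — 3 statements merged into one kernel-verified Lean document; each statement's English description precedes it below -/
import Mathlib

section
/- For all positive integers m and k, the formal power series identity f_k^{2^m} ≡ f_{2k}^{2^{m-1}} (mod 2^m) holds, where f_m = Π_{j≥1}(1 − q^{mj}); that is, every coefficient of f_k^{2^m} − f_{2k}^{2^{m-1}} is divisible by 2^m. -/
open PowerSeries

/-- The infinite product `f_m = ∏_{j ≥ 1} (1 - q^(m*j))` as a formal power series with
integer coefficients: the coefficient of `q^N` is computed from a sufficiently long
finite partial product (valid for `m ≥ 1`). -/
noncomputable def fE (m : ℕ) : PowerSeries ℤ :=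
  PowerSeries.mk fun N =>
    PowerSeries.coeff N (∏ j ∈ Finset.range (N + 1), (1 - (PowerSeries.X : PowerSeries ℤ) ^ (m * (j + 1))))

namespace EulerAux

/-- partial product -/
noncomputable def P (m M : ℕ) : PowerSeries ℤ :=
  ∏ j ∈ Finset.range M, (1 - (X : PowerSeries ℤ) ^ (m * (j + 1)))

lemma C_dvd_of_forall {a : ℤ} {F : PowerSeries ℤ} (h : ∀ n, a ∣ coeff n F) :
    C a ∣ F := by
  refine ⟨mk fun n => coeff n F / a, ?_⟩
  ext n
  rw [coeff_C_mul, coeff_mk, Int.mul_ediv_cancel' (h n)]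

lemma forall_of_C_dvd {a : ℤ} {F : PowerSeries ℤ} (h : C a ∣ F) (n : ℕ) :
    a ∣ coeff n F := by
  obtain ⟨G, rfl⟩ := h
  rw [coeff_C_mul]
  exact Dvd.intro _ rfl

lemma coeff_P_stable (m : ℕ) (hm : 0 < m) {i M : ℕ} (h : i + 1 ≤ M) :
    coeff i (P m M) = coeff i (P m (i + 1)) := by
  induction M with
  | zero => omega
  | succ M ih =>
    rcases Nat.lt_or_ge (i + 1) (M + 1) with hlt | hge
    · have hM : i + 1 ≤ M := by omega
      rw [← ih hM]
      have : P m (M + 1) = P m M * (1 - X ^ (m * (M + 1))) := by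
        rw [P, Finset.prod_range_succ]; rfl
      rw [this, mul_sub, mul_one, map_sub, coeff_mul_X_pow']
      have : ¬ (m * (M + 1) ≤ i) := by
        have : M + 1 ≤ m * (M + 1) := Nat.le_mul_of_pos_left _ hm
        omega
      rw [if_neg this, sub_zero]
    · have : M + 1 = i + 1 := by omega
      rw [this]

lemma coeff_fE (m : ℕ) (hm : 0 < m) {i N : ℕ} (hi : i ≤ N) :
    coeff i (fE m) = coeff i (P m (N + 1)) := by
  rw [fE, coeff_mk, coeff_P_stable m hm (by omega)]
  rfl

lemma agree_mul {F G F' G' : PowerSeries ℤ} {N : ℕ}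
    (h : ∀ i ≤ N, coeff i F = coeff i G)
    (h' : ∀ i ≤ N, coeff i F' = coeff i G') :
    ∀ i ≤ N, coeff i (F * F') = coeff i (G * G') := by
  intro i hi
  rw [coeff_mul, coeff_mul]
  refine Finset.sum_congr rfl fun p hp => ?_
  rw [Finset.HasAntidiagonal.mem_antidiagonal] at hp
  rw [h p.1 (by omega), h' p.2 (by omega)]

lemma prod_sub_prod_dvd {ι : Type*} (s : Finset ι) (F G : ι → PowerSeries ℤ) (a : ℤ)
    (h : ∀ j ∈ s, C a ∣ (F j - G j)) :
    C a ∣ (∏ j ∈ s, F j - ∏ j ∈ s, G j) := by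
  induction s using Finset.cons_induction with
  | empty => simp
  | cons i s his ih =>
    rw [Finset.prod_cons, Finset.prod_cons]
    have key : F i * ∏ j ∈ s, F j - G i * ∏ j ∈ s, G j
        = (F i - G i) * ∏ j ∈ s, F j + G i * (∏ j ∈ s, F j - ∏ j ∈ s, G j) := by ring
    rw [key]
    exact dvd_add ((h i (Finset.mem_cons_self _ _)).mul_right _)
      ((ih fun j hj => h j (Finset.mem_cons_of_mem hj)).mul_left _)

lemma two_dvd_sq_sub (k N : ℕ) (hk : 0 < k) :
    C (2:ℤ) ∣ (P k (N + 1)) ^ 2 - P (2 * k) (N + 1) := by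
  rw [P, P, ← Finset.prod_pow]
  refine prod_sub_prod_dvd _ _ _ _ fun j _ => ?_
  refine ⟨(X : PowerSeries ℤ) ^ (k * (j + 1) * 2) - X ^ (k * (j + 1)), ?_⟩
  have h2 : 2 * k * (j + 1) = k * (j + 1) * 2 := by ring
  have hC : (C (2:ℤ) : PowerSeries ℤ) = 2 := by simp
  rw [h2, pow_mul, hC]
  ring

lemma two_dvd_fE : ∀ (k : ℕ), 0 < k → C (2:ℤ) ∣ (fE k) ^ 2 - fE (2 * k) := by
  intro k hk
  apply C_dvd_of_forall
  intro N
  have h1 : ∀ i ≤ N, coeff i (fE k) = coeff i (P k (N + 1)) :=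
    fun i hi => coeff_fE k hk hi
  have h2 : coeff N ((fE k) ^ 2) = coeff N ((P k (N + 1)) ^ 2) := by
    rw [pow_two, pow_two]
    exact agree_mul h1 h1 N le_rfl
  have h3 : coeff N (fE (2 * k)) = coeff N (P (2 * k) (N + 1)) :=
    coeff_fE (2 * k) (by omega) le_rfl
  rw [map_sub, h2, h3, ← map_sub]
  exact forall_of_C_dvd (two_dvd_sq_sub k N hk) N

lemma lift (A B : PowerSeries ℤ) (h : C (2:ℤ) ∣ A - B) (t : ℕ) :
    C ((2:ℤ) ^ (t + 1)) ∣ A ^ (2 ^ t) - B ^ (2 ^ t) := by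
  induction t with
  | zero => simpa using h
  | succ t ih =>
    have hp : (2 : ℕ) ^ (t + 1) = 2 ^ t * 2 := by ring
    have key : A ^ (2 ^ (t + 1)) - B ^ (2 ^ (t + 1))
        = (A ^ (2 ^ t) - B ^ (2 ^ t)) * ((A ^ (2 ^ t) - B ^ (2 ^ t)) + 2 * B ^ (2 ^ t)) := by
      rw [hp, pow_mul, pow_mul]
      ring
    rw [key]
    have hC2 : C (2:ℤ) ∣ A ^ (2 ^ t) - B ^ (2 ^ t) := by
      refine dvd_trans ?_ ih
      exact map_dvd (C (R := ℤ)) (dvd_pow_self 2 (by omega))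
    have h2' : C (2:ℤ) ∣ (A ^ (2 ^ t) - B ^ (2 ^ t)) + 2 * B ^ (2 ^ t) := by
      refine dvd_add hC2 (Dvd.dvd.mul_right ?_ _)
      simp
    have : C ((2:ℤ) ^ (t + 1 + 1)) = C ((2:ℤ) ^ (t + 1)) * C (2:ℤ) := by
      rw [← map_mul]; ring_nf
    rw [this]
    exact mul_dvd_mul ih h2'

end EulerAux

theorem euler_pow_congr (m k : ℕ) (hm : 0 < m) (hk : 0 < k) (N : ℕ) :
    ((2 : ℤ) ^ m) ∣ PowerSeries.coeff N ((fE k) ^ (2 ^ m) - (fE (2 * k)) ^ (2 ^ (m - 1))) := by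
  obtain ⟨t, rfl⟩ : ∃ t, m = t + 1 := ⟨m - 1, by omega⟩
  have hpow : (fE k) ^ (2 ^ (t + 1)) = ((fE k) ^ 2) ^ (2 ^ t) := by
    rw [← pow_mul, pow_succ, mul_comm]
  have ht : t + 1 - 1 = t := by omega
  rw [hpow, ht]
  exact EulerAux.forall_of_C_dvd
    (EulerAux.lift _ _ (EulerAux.two_dvd_fE k hk) t) N
end

section
/- As formal power series, 1/f_1^2 = f_8^5 / (f_2^5 f_16^2) + 2q · f_4^2 f_16^2 / (f_2^5 f_8), where f_m = Π_{j≥1}(1 − q^{mj}). -/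
open PowerSeries

/-- The infinite product `f_m = ∏_{j ≥ 1} (1 - q^(m*j))` as a formal power series with
rational coefficients: the coefficient of `q^N` is computed from a sufficiently long
finite partial product (valid for `m ≥ 1`). -/
noncomputable def fQ (m : ℕ) : PowerSeries ℚ :=
  PowerSeries.mk fun N =>
    PowerSeries.coeff N (∏ j ∈ Finset.range (N + 1), (1 - (PowerSeries.X : PowerSeries ℚ) ^ (m * (j + 1))))

namespace Diss

open PowerSeries Finset

/-- coefficient of `X^d * f`. -/
lemma coeff_X_pow_mul'' (f : PowerSeries ℚ) (d n : ℕ) :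
    (coeff n) ((X:PowerSeries ℚ)^d * f) = if d ≤ n then coeff (n - d) f else 0 := by
  split_ifs with h
  · obtain ⟨c, rfl⟩ := Nat.exists_eq_add_of_le h
    have := PowerSeries.coeff_X_pow_mul f d c
    rw [show d + c - d = c by omega, show d + c = c + d by omega]
    exact this
  · rw [PowerSeries.coeff_mul]
    apply Finset.sum_eq_zero
    rintro ⟨i, j⟩ hij
    rw [Finset.HasAntidiagonal.mem_antidiagonal] at hij
    rw [PowerSeries.coeff_X_pow]
    have : i ≠ d := by omega
    simp [this]

/-- antidiagonal collapse with a point condition on the first coordinate -/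
lemma sum_antidiagonal_eq (n c : ℕ) (f : ℕ → ℚ) :
    (∑ p ∈ Finset.HasAntidiagonal.antidiagonal n, if p.1 = c then f p.2 else 0)
      = if c ≤ n then f (n - c) else 0 := by
  split_ifs with h
  · rw [Finset.sum_eq_single (c, n - c)]
    · simp
    · rintro ⟨i, j⟩ hij hne
      rw [Finset.HasAntidiagonal.mem_antidiagonal] at hij
      have : i ≠ c := by rintro rfl; exact hne (by simp; omega)
      simp [this]
    · intro hmem
      exact absurd (Finset.HasAntidiagonal.mem_antidiagonal.2 (by omega)) hmem
  · apply Finset.sum_eq_zero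
    rintro ⟨i, j⟩ hij
    rw [Finset.HasAntidiagonal.mem_antidiagonal] at hij
    have : i ≠ c := by omega
    simp [this]

/-- antidiagonal double point condition -/
lemma sum_antidiagonal_pair (n a b : ℕ) :
    (∑ p ∈ Finset.HasAntidiagonal.antidiagonal n, (if p.1 = a then (1:ℚ) else 0) * (if p.2 = b then (1:ℚ) else 0))
      = if a + b = n then 1 else 0 := by
  split_ifs with h
  · rw [Finset.sum_eq_single (a, b)]
    · simp
    · rintro ⟨i, j⟩ hij hne
      rw [Finset.HasAntidiagonal.mem_antidiagonal] at hij
      dsimp only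
      rcases eq_or_ne i a with rfl | hia
      · have : j ≠ b := by rintro rfl; exact hne rfl
        simp [this]
      · simp [hia]
    · intro hmem
      exact absurd (Finset.HasAntidiagonal.mem_antidiagonal.2 h) hmem
  · apply Finset.sum_eq_zero
    rintro ⟨i, j⟩ hij
    rw [Finset.HasAntidiagonal.mem_antidiagonal] at hij
    dsimp only
    rcases eq_or_ne i a with rfl | hia
    · have : j ≠ b := by rintro rfl; exact h hij
      simp [this]
    · simp [hia]
  
/-- expand: substitute X ↦ X^k -/
noncomputable def Ex (k : ℕ) (f : PowerSeries ℚ) : PowerSeries ℚ :=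
  PowerSeries.mk fun n => if k ∣ n then coeff (n / k) f else 0

lemma coeff_Ex (k n : ℕ) (f : PowerSeries ℚ) :
    coeff n (Ex k f) = if k ∣ n then coeff (n / k) f else 0 := coeff_mk _ _

lemma coeff_Ex_mul (k n : ℕ) (hk : k ≠ 0) (f : PowerSeries ℚ) :
    coeff (k * n) (Ex k f) = coeff n f := by
  rw [coeff_Ex, if_pos ⟨n, rfl⟩, Nat.mul_div_cancel_left _ (Nat.pos_of_ne_zero hk)]

lemma constantCoeff_Ex (k : ℕ) (f : PowerSeries ℚ) :
    constantCoeff (Ex k f) = constantCoeff f := by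
  rw [← PowerSeries.coeff_zero_eq_constantCoeff]
  rw [coeff_Ex, if_pos (Nat.dvd_zero k), Nat.zero_div]

lemma Ex_one (k : ℕ) (hk : k ≠ 0) : Ex k (1 : PowerSeries ℚ) = 1 := by
  ext n
  rw [coeff_Ex]
  rcases Nat.eq_zero_or_pos n with rfl | hn
  · simp
  · have hne : n ≠ 0 := hn.ne'
    by_cases h : k ∣ n
    · have : n / k ≠ 0 := by
        obtain ⟨c, rfl⟩ := h
        have : c ≠ 0 := by rintro rfl; simp at hne
        rw [Nat.mul_div_cancel_left _ (Nat.pos_of_ne_zero hk)]; exact this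
      simp [h, PowerSeries.coeff_one, this, hne]
    · simp [h, PowerSeries.coeff_one, hne]

lemma Ex_add (k : ℕ) (f g : PowerSeries ℚ) : Ex k (f + g) = Ex k f + Ex k g := by
  ext n; rw [map_add, coeff_Ex, coeff_Ex, coeff_Ex]
  split_ifs <;> simp

lemma Ex_mul (k : ℕ) (hk : k ≠ 0) (f g : PowerSeries ℚ) :
    Ex k (f * g) = Ex k f * Ex k g := by
  ext n
  rw [coeff_Ex]
  by_cases h : k ∣ n
  · obtain ⟨m, rfl⟩ := h
    rw [if_pos ⟨m, rfl⟩, Nat.mul_div_cancel_left _ (Nat.pos_of_ne_zero hk),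
      PowerSeries.coeff_mul, PowerSeries.coeff_mul]
    have hemb : Function.Injective (fun p : ℕ × ℕ => (k * p.1, k * p.2)) := by
      rintro ⟨a, b⟩ ⟨c, d⟩ h
      simp only [Prod.mk.injEq] at h ⊢
      exact ⟨Nat.eq_of_mul_eq_mul_left (Nat.pos_of_ne_zero hk) h.1,
        Nat.eq_of_mul_eq_mul_left (Nat.pos_of_ne_zero hk) h.2⟩
    rw [show (Finset.HasAntidiagonal.antidiagonal m).sum (fun p => coeff p.1 f * coeff p.2 g)
        = ∑ p ∈ (Finset.HasAntidiagonal.antidiagonal m).map ⟨_, hemb⟩,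
            coeff p.1 (Ex k f) * coeff p.2 (Ex k g) by
      rw [Finset.sum_map]
      apply Finset.sum_congr rfl
      rintro ⟨i, j⟩ _
      simp only [Function.Embedding.coeFn_mk]
      rw [coeff_Ex_mul _ _ hk, coeff_Ex_mul _ _ hk]]

    apply Finset.sum_subset
    · rintro ⟨i, j⟩ hij
      simp only [Finset.mem_map, Finset.HasAntidiagonal.mem_antidiagonal, Function.Embedding.coeFn_mk,
        Prod.mk.injEq] at hij
      obtain ⟨⟨a, b⟩, hab, h1, h2⟩ := hij
      rw [Finset.HasAntidiagonal.mem_antidiagonal]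
      subst h1; subst h2; rw [← Nat.mul_add, hab]
    · rintro ⟨i, j⟩ hij hnot
      rw [Finset.HasAntidiagonal.mem_antidiagonal] at hij
      by_cases hi : k ∣ i
      · by_cases hj : k ∣ j
        · exfalso
          obtain ⟨a, rfl⟩ := hi; obtain ⟨b, rfl⟩ := hj
          apply hnot
          simp only [Finset.mem_map, Function.Embedding.coeFn_mk]
          exact ⟨(a, b), Finset.HasAntidiagonal.mem_antidiagonal.2 (by
            have := hij; rw [← Nat.mul_add] at this
            exact Nat.eq_of_mul_eq_mul_left (Nat.pos_of_ne_zero hk) this), rfl⟩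
        · dsimp only
          rw [coeff_Ex k j g, if_neg hj]; ring
      · dsimp only
        rw [coeff_Ex k i f, if_neg hi]; ring
  · rw [if_neg h, PowerSeries.coeff_mul]
    symm; apply Finset.sum_eq_zero
    rintro ⟨i, j⟩ hij
    rw [Finset.HasAntidiagonal.mem_antidiagonal] at hij
    dsimp only at hij ⊢
    by_cases hi : k ∣ i
    · have hj : ¬ k ∣ j := fun hj => h (hij ▸ Nat.dvd_add hi hj)
      rw [coeff_Ex k j g, if_neg hj]; ring
    · rw [coeff_Ex k i f, if_neg hi]; ring


/-- truncation equivalence -/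
def Teq (N : ℕ) (f g : PowerSeries ℚ) : Prop := ∀ n ≤ N, coeff n f = coeff n g

lemma Teq.mul {N : ℕ} {f f' g g' : PowerSeries ℚ} (hf : Teq N f f') (hg : Teq N g g') :
    Teq N (f * g) (f' * g') := by
  intro n hn
  rw [PowerSeries.coeff_mul, PowerSeries.coeff_mul]
  apply Finset.sum_congr rfl
  rintro ⟨i, j⟩ hij
  rw [Finset.HasAntidiagonal.mem_antidiagonal] at hij
  dsimp only
  rw [hf i (by omega), hg j (by omega)]

lemma Teq.coeff {N : ℕ} {f g : PowerSeries ℚ} (h : Teq N f g) : coeff N f = coeff N g :=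
  h N le_rfl

lemma Teq.ex {N : ℕ} {f g : PowerSeries ℚ} (k : ℕ) (h : Teq N f g) : Teq N (Ex k f) (Ex k g) := by
  intro n hn
  rw [coeff_Ex, coeff_Ex]
  split_ifs with hd
  · exact h _ (le_trans (Nat.div_le_self n k) hn)
  · rfl

/-- finite partial product -/
noncomputable def FP (m r : ℕ) (ε : ℚ) (K : ℕ) : PowerSeries ℚ :=
  ∏ j ∈ Finset.range K, (1 + PowerSeries.C ε * X ^ (m * j + r))

/-- master counting formula -/
lemma coeff_FP (m r : ℕ) (ε : ℚ) (K n : ℕ) :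
    coeff n (FP m r ε K)
      = ∑ A ∈ (Finset.range K).powerset,
          if (∑ j ∈ A, (m * j + r)) = n then ε ^ A.card else 0 := by
  induction K generalizing n with
  | zero =>
    simp only [FP, Finset.range_zero, Finset.prod_empty, Finset.powerset_empty,
      Finset.sum_singleton, Finset.sum_empty, Finset.card_empty, pow_zero]
    rw [PowerSeries.coeff_one]
    by_cases h : n = 0 <;> simp [h, eq_comm]
  | succ K ih =>
    set e := m * K + r with he
    have hsplit : FP m r ε (K + 1) = FP m r ε K * (1 + PowerSeries.C ε * X ^ e) :=
      Finset.prod_range_succ _ _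
    have h2 : coeff n (FP m r ε (K + 1))
        = coeff n (FP m r ε K) + ε * (if e ≤ n then coeff (n - e) (FP m r ε K) else 0) := by
      rw [hsplit, mul_add, mul_one, map_add]
      congr 1
      rw [show FP m r ε K * (PowerSeries.C ε * X ^ e) = PowerSeries.C ε * (X ^ e * FP m r ε K) by ring,
        PowerSeries.coeff_C_mul, coeff_X_pow_mul'' _ _ _]
    rw [h2, Finset.range_add_one, Finset.sum_powerset_insert (by simp), ih]
    congr 1
    split_ifs with h
    · rw [ih, Finset.mul_sum]
      apply Finset.sum_congr rfl
      intro A hA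
      rw [Finset.mem_powerset] at hA
      have hK : K ∉ A := fun hKA => by have := hA hKA; simp at this
      rw [Finset.sum_insert hK, Finset.card_insert_of_notMem hK]
      by_cases hw : (∑ j ∈ A, (m * j + r)) = n - e
      · rw [if_pos hw, if_pos (by omega), pow_succ]; ring
      · rw [if_neg hw, if_neg (by omega)]; ring
    · rw [mul_zero]
      symm
      apply Finset.sum_eq_zero
      intro A hA
      rw [Finset.mem_powerset] at hA
      have hK : K ∉ A := fun hKA => by have := hA hKA; simp at this
      rw [Finset.sum_insert hK]
      rw [if_neg (by omega)]


-- REAL CONTENT STARTS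
lemma wt_mem_bound {m r : ℕ} (hm : 1 ≤ m) (hr : 1 ≤ r) {A : Finset ℕ} {n : ℕ}
    (hw : (∑ j ∈ A, (m * j + r)) = n) {j : ℕ} (hj : j ∈ A) : j < n := by
  have h1 : m * j + r ≤ ∑ j ∈ A, (m * j + r) :=
    Finset.single_le_sum (f := fun j => m * j + r) (fun i _ => Nat.zero_le _) hj
  have : j + 1 ≤ m * j + r := by nlinarith
  omega

lemma coeff_FP_stable (m r : ℕ) (hm : 1 ≤ m) (hr : 1 ≤ r) (ε : ℚ) {K n : ℕ} (hK : n ≤ K) :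
    coeff n (FP m r ε K) = coeff n (FP m r ε n) := by
  rw [coeff_FP, coeff_FP]
  symm
  apply Finset.sum_subset
  · exact Finset.powerset_mono.2 (Finset.range_subset_range.2 hK)
  · intro A hA hnA
    rw [if_neg]
    intro hw
    apply hnA
    rw [Finset.mem_powerset]
    intro j hj
    exact Finset.mem_range.2 (wt_mem_bound hm hr hw hj)

noncomputable def PP (m r : ℕ) (ε : ℚ) : PowerSeries ℚ :=
  PowerSeries.mk fun N => coeff N (FP m r ε (N + 1))

lemma coeff_PP (m r : ℕ) (hm : 1 ≤ m) (hr : 1 ≤ r) (ε : ℚ) {K n : ℕ} (hK : n ≤ K) :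
    coeff n (PP m r ε) = coeff n (FP m r ε K) := by
  rw [PP, coeff_mk, coeff_FP_stable m r hm hr ε hK, coeff_FP_stable m r hm hr ε (Nat.le_succ n)]

lemma Teq_PP (m r : ℕ) (hm : 1 ≤ m) (hr : 1 ≤ r) (ε : ℚ) {K N : ℕ} (hK : N ≤ K) :
    Teq N (PP m r ε) (FP m r ε K) := fun n hn => coeff_PP m r hm hr ε (le_trans hn hK)

lemma coeff_PP_count (m r : ℕ) (hm : 1 ≤ m) (hr : 1 ≤ r) (ε : ℚ) (n : ℕ) :
    coeff n (PP m r ε)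
      = ∑ A ∈ (Finset.range n).powerset,
          if (∑ j ∈ A, (m * j + r)) = n then ε ^ A.card else 0 := by
  rw [coeff_PP m r hm hr ε (le_refl n), coeff_FP]

lemma constantCoeff_PP (m r : ℕ) (hm : 1 ≤ m) (hr : 1 ≤ r) (ε : ℚ) :
    constantCoeff (PP m r ε) = 1 := by
  rw [← PowerSeries.coeff_zero_eq_constantCoeff, coeff_PP_count m r hm hr]
  simp

/-- the given fQ equals PP m m (-1) -/
lemma fQ_eq_PP (m : ℕ) : fQ m = PP m m (-1) := by
  ext n
  unfold fQ PP FP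
  rw [coeff_mk, coeff_mk]
  congr 1
  apply Finset.prod_congr rfl
  intro j _
  rw [show m * (j + 1) = m * j + m by ring, map_neg, map_one]
  ring

lemma prod_range_even_odd (K : ℕ) (g : ℕ → PowerSeries ℚ) :
    ∏ j ∈ Finset.range (2 * K), g j
      = (∏ j ∈ Finset.range K, g (2 * j)) * ∏ j ∈ Finset.range K, g (2 * j + 1) := by
  induction K with
  | zero => simp
  | succ K ih =>
    rw [show 2 * (K + 1) = 2 * K + 1 + 1 by ring, Finset.prod_range_succ, Finset.prod_range_succ,
      ih, Finset.prod_range_succ, Finset.prod_range_succ]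
    ring

/-- M1 : parity splitting of a product -/
lemma PP_split (m r : ℕ) (hm : 1 ≤ m) (hr : 1 ≤ r) (ε : ℚ) :
    PP m r ε = PP (2 * m) r ε * PP (2 * m) (m + r) ε := by
  ext n
  have h1 : coeff n (PP m r ε) = coeff n (FP m r ε (2 * n)) :=
    coeff_PP m r hm hr ε (by omega)
  have h2 : Teq n (PP (2 * m) r ε * PP (2 * m) (m + r) ε)
      (FP (2 * m) r ε n * FP (2 * m) (m + r) ε n) :=
    Teq.mul (Teq_PP _ _ (by omega) hr ε le_rfl) (Teq_PP _ _ (by omega) (by omega) ε le_rfl)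
  rw [h1, h2 n le_rfl]
  unfold FP
  rw [prod_range_even_odd]
  have eA : ∀ j : ℕ, m * (2 * j) + r = 2 * m * j + r := fun j => by ring
  have eB : ∀ j : ℕ, m * (2 * j + 1) + r = 2 * m * j + (m + r) := fun j => by ring
  simp only [eA, eB]

/-- M2 : conjugate product -/
lemma PP_conj (m r : ℕ) (hm : 1 ≤ m) (hr : 1 ≤ r) :
    PP m r 1 * PP m r (-1) = PP (2 * m) (2 * r) (-1) := by
  ext n
  have h2 : Teq n (PP m r 1 * PP m r (-1)) (FP m r 1 n * FP m r (-1) n) :=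
    Teq.mul (Teq_PP _ _ hm hr 1 le_rfl) (Teq_PP _ _ hm hr (-1) le_rfl)
  rw [h2 n le_rfl, coeff_PP (2*m) (2*r) (by omega) (by omega) (-1) (le_refl n)]
  unfold FP
  rw [← Finset.prod_mul_distrib]
  congr 1
  apply Finset.prod_congr rfl
  intro j _
  rw [show 2 * m * j + 2 * r = 2 * (m * j + r) by ring, pow_mul]
  simp only [map_one, map_neg, one_mul]
  ring

/-- M3 : expansion -/
lemma Ex_PP (k m r : ℕ) (hk : 1 ≤ k) (hm : 1 ≤ m) (hr : 1 ≤ r) (ε : ℚ) :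
    Ex k (PP m r ε) = PP (k * m) (k * r) ε := by
  have hFP : ∀ K, Ex k (FP m r ε K) = FP (k * m) (k * r) ε K := by
    intro K
    induction K with
    | zero => simp only [FP, Finset.range_zero, Finset.prod_empty]; exact Ex_one k (by omega)
    | succ K ih =>
      unfold FP
      rw [Finset.prod_range_succ, Ex_mul k (by omega), Finset.prod_range_succ]
      show Ex k (FP m r ε K) * _ = FP (k*m) (k*r) ε K * _
      rw [ih]
      congr 1
      ext n
      rw [coeff_Ex, map_add, map_add, PowerSeries.coeff_one, PowerSeries.coeff_one,
        PowerSeries.coeff_C_mul, PowerSeries.coeff_C_mul, PowerSeries.coeff_X_pow,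
        PowerSeries.coeff_X_pow]
      by_cases hd : k ∣ n
      · obtain ⟨c, rfl⟩ := hd
        rw [if_pos ⟨c, rfl⟩, Nat.mul_div_cancel_left _ (by omega)]
        have he : (k * c = k * m * K + k * r) ↔ (c = m * K + r) := by
          constructor
          · intro h
            have h2 : k * c = k * (m * K + r) := by linarith [h]
            exact Nat.eq_of_mul_eq_mul_left (by omega) h2
          · intro h; subst h; ring
        have hz : (k * c = 0) ↔ (c = 0) := by
          rw [Nat.mul_eq_zero]; omega
        simp only [hz, he]
      · rw [if_neg hd]
        have h1 : n ≠ 0 := by rintro rfl; exact hd ⟨0, by ring⟩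
        have h2 : n ≠ k * m * K + k * r := by
          rintro rfl; exact hd ⟨m * K + r, by ring⟩
        rw [if_neg h1, if_neg h2]
        simp
  ext n
  have := (Teq.ex k (Teq_PP m r hm hr ε (le_refl n))) n le_rfl
  rw [this, hFP]
  exact (coeff_PP _ _ (by nlinarith) (by nlinarith) ε le_rfl).symm


/-- odd weight -/
def owt (S : Finset ℕ) : ℕ := ∑ j ∈ S, (2 * j + 1)

lemma owt_le_mem {S : Finset ℕ} {j : ℕ} (hj : j ∈ S) : 2 * j + 1 ≤ owt S :=
  Finset.single_le_sum (f := fun j => 2 * j + 1) (fun i _ => Nat.zero_le _) hj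

lemma owt_sq_le_aux : ∀ (n : ℕ) (S : Finset ℕ), S.card = n → n * n ≤ owt S := by
  intro n
  induction n with
  | zero => intro S _; simp
  | succ n ih =>
    intro S hn
    have hne : S.Nonempty := by
      rw [← Finset.card_pos]; omega
    have hMS : S.max' hne ∈ S := S.max'_mem hne
    set M := S.max' hne with hM
    have hsub : S ⊆ Finset.range (M + 1) := by
      intro a ha
      rw [Finset.mem_range]
      exact Nat.lt_succ_of_le (S.le_max' a ha)
    have hcard : n + 1 ≤ M + 1 := by
      calc n + 1 = S.card := hn.symm
        _ ≤ (Finset.range (M + 1)).card := Finset.card_le_card hsub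
        _ = M + 1 := Finset.card_range _
    have herase : owt S = owt (S.erase M) + (2 * M + 1) := by
      rw [owt, owt, Finset.sum_erase_add _ _ hMS]
    have hce : (S.erase M).card = n := by
      rw [Finset.card_erase_of_mem hMS, hn]
      omega
    have hih := ih (S.erase M) hce
    have hsq : (n + 1) * (n + 1) = n * n + 2 * n + 1 := by ring
    omega

lemma owt_sq_le (S : Finset ℕ) : S.card * S.card ≤ owt S :=
  owt_sq_le_aux S.card S rfl

/-- pairs of finite sets of "odd numbers" (indexed: j ↔ 2j+1) with total weight N -/
def Wset (N : ℕ) : Finset (Finset ℕ × Finset ℕ) :=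
  ((Finset.range N).powerset ×ˢ (Finset.range N).powerset).filter
    (fun p => owt p.1 + owt p.2 = N)

lemma mem_Wset {N : ℕ} {p : Finset ℕ × Finset ℕ} :
    p ∈ Wset N ↔ owt p.1 + owt p.2 = N := by
  constructor
  · intro h; exact (Finset.mem_filter.1 h).2
  · intro h
    refine Finset.mem_filter.2 ⟨Finset.mem_product.2 ⟨?_, ?_⟩, h⟩ <;>
      rw [Finset.mem_powerset] <;> intro j hj <;> rw [Finset.mem_range]
    · have := owt_le_mem hj; omega
    · have := owt_le_mem hj; omega

def pset (k : ℤ) (N : ℕ) : Finset (Finset ℕ × Finset ℕ) :=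
  (Wset N).filter (fun p => (p.1.card : ℤ) - p.2.card = k)

lemma mem_pset {k : ℤ} {N : ℕ} {p : Finset ℕ × Finset ℕ} :
    p ∈ pset k N ↔ owt p.1 + owt p.2 = N ∧ (p.1.card : ℤ) - p.2.card = k := by
  rw [pset, Finset.mem_filter, mem_Wset]

/-- image lemmas -/
lemma owt_image_succ (A : Finset ℕ) : owt (A.image (· + 1)) = owt A + 2 * A.card := by
  rw [owt, Finset.sum_image (by intro a _ b _ h; exact add_right_cancel h)]
  rw [owt]
  have h1 : ∀ x ∈ A, 2 * (x + 1) + 1 = (2 * x + 1) + 2 := fun x _ => by ring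
  rw [Finset.sum_congr rfl h1, Finset.sum_add_distrib, Finset.sum_const, smul_eq_mul]
  ring

lemma card_image_succ (A : Finset ℕ) : (A.image (· + 1)).card = A.card :=
  Finset.card_image_of_injective _ (add_left_injective 1)

lemma zero_not_mem_image_succ (A : Finset ℕ) : 0 ∉ A.image (· + 1) := by
  simp

lemma image_pred_succ {A : Finset ℕ} (h : 0 ∉ A) : (A.image (· - 1)).image (· + 1) = A := by
  ext a
  simp only [Finset.mem_image]
  constructor
  · rintro ⟨b, ⟨c, hc, rfl⟩, rfl⟩
    have hc0 : c ≠ 0 := by rintro rfl; exact h hc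
    have : c - 1 + 1 = c := by omega
    rw [this]; exact hc
  · intro ha
    have ha0 : a ≠ 0 := by rintro rfl; exact h ha
    exact ⟨a - 1, ⟨a, ha, rfl⟩, by omega⟩

lemma image_succ_pred (A : Finset ℕ) : (A.image (· + 1)).image (· - 1) = A := by
  ext a
  simp only [Finset.mem_image]
  constructor
  · rintro ⟨b, ⟨c, hc, rfl⟩, rfl⟩
    simpa using hc
  · intro ha
    exact ⟨a + 1, ⟨a, ha, rfl⟩, by omega⟩

lemma card_image_pred {A : Finset ℕ} (h : 0 ∉ A) : (A.image (· - 1)).card = A.card := by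
  conv_rhs => rw [← image_pred_succ h]
  rw [card_image_succ]

lemma owt_image_pred {A : Finset ℕ} (h : 0 ∉ A) :
    owt A = owt (A.image (· - 1)) + 2 * A.card := by
  conv_lhs => rw [← image_pred_succ h]
  rw [owt_image_succ, card_image_pred h]

/-- the shift bijection -/
def fwd (p : Finset ℕ × Finset ℕ) : Finset ℕ × Finset ℕ :=
  if 0 ∈ p.1 then ((p.1.erase 0).image (· - 1), p.2.image (· + 1))
  else (p.1.image (· - 1), insert 0 (p.2.image (· + 1)))

def bwd (p : Finset ℕ × Finset ℕ) : Finset ℕ × Finset ℕ :=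
  if 0 ∈ p.2 then (p.1.image (· + 1), (p.2.erase 0).image (· - 1))
  else (insert 0 (p.1.image (· + 1)), p.2.image (· - 1))

lemma pset_card_succ (j N' : ℕ) :
    (pset ((j : ℤ) + 1) (N' + (2 * j + 1))).card = (pset (j : ℤ) N').card := by
  apply Finset.card_nbij' fwd bwd
  · -- fwd maps in
    rintro ⟨S, T⟩ hp
    rw [Finset.mem_coe, mem_pset] at hp
    obtain ⟨hw, hk⟩ := hp
    rw [Finset.mem_coe, mem_pset, fwd]
    by_cases h0 : 0 ∈ S
    · rw [if_pos h0]
      dsimp only at *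
      have e1 : owt S = owt (S.erase 0) + 1 := by
        rw [owt, owt, Finset.sum_erase_add _ _ h0]
      have h0e : (0:ℕ) ∉ S.erase 0 := Finset.notMem_erase _ _
      have e2 : owt (S.erase 0) = owt ((S.erase 0).image (· - 1)) + 2 * (S.erase 0).card :=
        owt_image_pred h0e
      have e3 : (S.erase 0).card = S.card - 1 := Finset.card_erase_of_mem h0
      have e4 : ((S.erase 0).image (· - 1)).card = (S.erase 0).card := card_image_pred h0e
      have e5 : owt (T.image (· + 1)) = owt T + 2 * T.card := owt_image_succ T
      have e6 : (T.image (· + 1)).card = T.card := card_image_succ T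
      have hS1 : 1 ≤ S.card := Finset.card_pos.2 ⟨0, h0⟩
      constructor <;> omega
    · rw [if_neg h0]
      dsimp only at *
      have e2 : owt S = owt (S.image (· - 1)) + 2 * S.card := owt_image_pred h0
      have e4 : (S.image (· - 1)).card = S.card := card_image_pred h0
      have h0T : (0:ℕ) ∉ T.image (· + 1) := zero_not_mem_image_succ T
      have e5 : owt (insert 0 (T.image (· + 1))) = 1 + (owt T + 2 * T.card) := by
        rw [owt, Finset.sum_insert h0T]
        rw [show 2 * 0 + 1 = 1 by ring]
        rw [← owt, owt_image_succ]
      have e6 : (insert 0 (T.image (· + 1))).card = T.card + 1 := by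
        rw [Finset.card_insert_of_notMem h0T, card_image_succ]
      constructor <;> omega
  · -- bwd maps in
    rintro ⟨S, T⟩ hp
    rw [Finset.mem_coe, mem_pset] at hp
    obtain ⟨hw, hk⟩ := hp
    rw [Finset.mem_coe, mem_pset, bwd]
    by_cases h0 : 0 ∈ T
    · rw [if_pos h0]
      dsimp only at *
      have e1 : owt T = owt (T.erase 0) + 1 := by
        rw [owt, owt, Finset.sum_erase_add _ _ h0]
      have h0e : (0:ℕ) ∉ T.erase 0 := Finset.notMem_erase _ _
      have e2 : owt (T.erase 0) = owt ((T.erase 0).image (· - 1)) + 2 * (T.erase 0).card :=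
        owt_image_pred h0e
      have e3 : (T.erase 0).card = T.card - 1 := Finset.card_erase_of_mem h0
      have e4 : ((T.erase 0).image (· - 1)).card = (T.erase 0).card := card_image_pred h0e
      have e5 : owt (S.image (· + 1)) = owt S + 2 * S.card := owt_image_succ S
      have e6 : (S.image (· + 1)).card = S.card := card_image_succ S
      have hT1 : 1 ≤ T.card := Finset.card_pos.2 ⟨0, h0⟩
      constructor <;> omega
    · rw [if_neg h0]
      dsimp only at *
      have e2 : owt T = owt (T.image (· - 1)) + 2 * T.card := owt_image_pred h0
      have e4 : (T.image (· - 1)).card = T.card := card_image_pred h0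
      have h0S : (0:ℕ) ∉ S.image (· + 1) := zero_not_mem_image_succ S
      have e5 : owt (insert 0 (S.image (· + 1))) = 1 + (owt S + 2 * S.card) := by
        rw [owt, Finset.sum_insert h0S]
        rw [show 2 * 0 + 1 = 1 by ring]
        rw [← owt, owt_image_succ]
      have e6 : (insert 0 (S.image (· + 1))).card = S.card + 1 := by
        rw [Finset.card_insert_of_notMem h0S, card_image_succ]
      constructor <;> omega
  · -- left inverse
    rintro ⟨S, T⟩ hp
    rw [fwd]
    by_cases h0 : 0 ∈ S
    · rw [if_pos h0]
      rw [bwd]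
      dsimp only
      rw [if_neg (zero_not_mem_image_succ T)]
      have h0e : (0:ℕ) ∉ S.erase 0 := Finset.notMem_erase _ _
      rw [image_pred_succ h0e, image_succ_pred, Finset.insert_erase h0]
    · rw [if_neg h0]
      rw [bwd]
      dsimp only
      rw [if_pos (Finset.mem_insert_self 0 _)]
      rw [image_pred_succ h0, Finset.erase_insert (zero_not_mem_image_succ T),
        image_succ_pred]
  · -- right inverse
    rintro ⟨S, T⟩ hp
    rw [bwd]
    by_cases h0 : 0 ∈ T
    · rw [if_pos h0]
      rw [fwd]
      dsimp only
      rw [if_neg (zero_not_mem_image_succ S)]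
      have h0e : (0:ℕ) ∉ T.erase 0 := Finset.notMem_erase _ _
      rw [image_succ_pred, image_pred_succ h0e, Finset.insert_erase h0]
    · rw [if_neg h0]
      rw [fwd]
      dsimp only
      rw [if_pos (Finset.mem_insert_self 0 _)]
      rw [Finset.erase_insert (zero_not_mem_image_succ S), image_succ_pred,
        image_pred_succ h0]

lemma pset_empty_of_lt {j N : ℕ} (h : N < 2 * j + 1) : pset ((j:ℤ) + 1) N = ∅ := by
  rw [Finset.eq_empty_iff_forall_notMem]
  rintro ⟨S, T⟩ hp
  rw [mem_pset] at hp
  obtain ⟨hw, hk⟩ := hp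
  dsimp only at *
  have h1 : j + 1 ≤ S.card := by omega
  have h2 : S.card * S.card ≤ owt S := owt_sq_le S
  nlinarith

lemma pset_neg (k : ℤ) (N : ℕ) : (pset (-k) N).card = (pset k N).card := by
  apply Finset.card_nbij' Prod.swap Prod.swap
  · rintro ⟨S, T⟩ hp
    rw [Finset.mem_coe, mem_pset] at hp ⊢
    simp only [Prod.swap_prod_mk] at *
    exact ⟨by omega, by omega⟩
  · rintro ⟨S, T⟩ hp
    rw [Finset.mem_coe, mem_pset] at hp ⊢
    simp only [Prod.swap_prod_mk] at *
    exact ⟨by omega, by omega⟩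
  · rintro ⟨S, T⟩ _; rfl
  · rintro ⟨S, T⟩ _; rfl

/-- the power series b_k -/
noncomputable def bS (k : ℤ) : PowerSeries ℚ :=
  PowerSeries.mk fun N => ((pset k N).card : ℚ)

lemma coeff_bS (k : ℤ) (N : ℕ) : coeff N (bS k) = ((pset k N).card : ℚ) := coeff_mk _ _

lemma bS_step (j : ℕ) : bS ((j:ℤ) + 1) = (X : PowerSeries ℚ) ^ (2 * j + 1) * bS (j:ℤ) := by
  ext N
  rw [coeff_bS, coeff_X_pow_mul'']
  split_ifs with h
  · rw [coeff_bS]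
    have h2 := pset_card_succ j (N - (2*j+1))
    rw [show N - (2*j+1) + (2*j+1) = N by omega] at h2
    rw [h2]
  · rw [pset_empty_of_lt (by omega)]
    simp

lemma bS_sq (j : ℕ) : bS (j:ℤ) = (X : PowerSeries ℚ) ^ (j * j) * bS 0 := by
  induction j with
  | zero => simp
  | succ j ih =>
    have hc : ((j + 1 : ℕ) : ℤ) = (j : ℤ) + 1 := by push_cast; ring
    rw [hc, bS_step, ih, show (j+1) * (j+1) = (2 * j + 1) + j * j by ring, pow_add]
    ring

lemma bS_neg (k : ℤ) : bS (-k) = bS k := by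
  ext N
  rw [coeff_bS, coeff_bS, pset_neg]

lemma bS_natAbs (k : ℤ) : bS k = (X : PowerSeries ℚ) ^ (k.natAbs * k.natAbs) * bS 0 := by
  rcases Int.natAbs_eq k with h | h
  · rw [h]; exact bS_sq _
  · conv_lhs => rw [h]
    rw [bS_neg]
    exact bS_sq _


def sgn (k : ℤ) : ℚ := if Even k then 1 else -1

lemma neg_one_pow_eq_sgn (s t : ℕ) : ((-1 : ℚ)) ^ (s + t) = sgn ((s : ℤ) - t) := by
  rw [sgn]
  by_cases h : Even (s + t)
  · rw [if_pos, h.neg_one_pow]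
    rw [Int.even_sub, Int.even_coe_nat, Int.even_coe_nat]
    rw [Nat.even_add] at h
    exact h
  · rw [if_neg, (Nat.not_even_iff_odd.1 h).neg_one_pow]
    rw [Int.even_sub, Int.even_coe_nat, Int.even_coe_nat]
    rw [Nat.even_add] at h
    exact h

lemma int_le_mul_self (k : ℤ) : k ≤ k * k := by
  rcases le_or_gt k 0 with h | h
  · nlinarith
  · nlinarith

lemma int_neg_le_mul_self (k : ℤ) : -k ≤ k * k := by
  rcases le_or_gt k 0 with h | h
  · nlinarith
  · nlinarith

noncomputable def sqc (N : ℕ) : ℚ := ∑ k ∈ Finset.Icc (-(N:ℤ)) N, if k * k = (N:ℤ) then 1 else 0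
noncomputable def sqcm (N : ℕ) : ℚ := ∑ k ∈ Finset.Icc (-(N:ℤ)) N, if k * k = (N:ℤ) then sgn k else 0
def tric (N : ℕ) : ℚ := ∑ c ∈ Finset.range (N+1), if c * (c+1) = 2 * N then (1:ℚ) else 0

noncomputable def phiS : PowerSeries ℚ := PowerSeries.mk sqc
noncomputable def phimS : PowerSeries ℚ := PowerSeries.mk sqcm
noncomputable def psiS : PowerSeries ℚ := PowerSeries.mk tric

/-- extension of the sqc sums to a larger interval -/
lemma sqc_ext {i N : ℕ} (h : i ≤ N) (g : ℤ → ℚ) :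
    (∑ k ∈ Finset.Icc (-(i:ℤ)) i, if k * k = (i:ℤ) then g k else 0)
      = ∑ k ∈ Finset.Icc (-(N:ℤ)) N, if k * k = (i:ℤ) then g k else 0 := by
  apply Finset.sum_subset
  · apply Finset.Icc_subset_Icc <;> omega
  · intro k hk hnk
    rw [if_neg]
    intro hkk
    apply hnk
    rw [Finset.mem_Icc]
    have h1 := int_le_mul_self k
    have h2 := int_neg_le_mul_self k
    omega

/-- coefficient of PP 2 1 ε as a sum over subsets of range N -/
lemma coeff_PP21 (ε : ℚ) {i N : ℕ} (h : i ≤ N) :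
    coeff i (PP 2 1 ε)
      = ∑ S ∈ (Finset.range N).powerset, if owt S = i then ε ^ S.card else 0 := by
  rw [coeff_PP 2 1 (by omega) (by omega) ε h, coeff_FP]
  rfl

lemma sum_antidiagonal_pair2 (n a b : ℕ) (x y : ℚ) :
    (∑ p ∈ Finset.HasAntidiagonal.antidiagonal n, (if a = p.1 then x else 0) * (if b = p.2 then y else 0))
      = if a + b = n then x * y else 0 := by
  split_ifs with h
  · rw [Finset.sum_eq_single (a, b)]
    · simp
    · rintro ⟨i, j⟩ hij hne
      rw [Finset.HasAntidiagonal.mem_antidiagonal] at hij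
      dsimp only
      rcases eq_or_ne a i with rfl | hia
      · have : b ≠ j := by rintro rfl; exact hne rfl
        simp [this]
      · simp [hia]
    · intro hmem
      exact absurd (Finset.HasAntidiagonal.mem_antidiagonal.2 h) hmem
  · apply Finset.sum_eq_zero
    rintro ⟨i, j⟩ hij
    rw [Finset.HasAntidiagonal.mem_antidiagonal] at hij
    dsimp only
    rcases eq_or_ne a i with rfl | hia
    · have : b ≠ j := by rintro rfl; exact h hij
      simp [this]
    · simp [hia]

/-- pair-count formula for the square of PP 2 1 ε -/
lemma G0 (ε : ℚ) (N : ℕ) :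
    coeff N (PP 2 1 ε * PP 2 1 ε) = ∑ p ∈ Wset N, ε ^ (p.1.card + p.2.card) := by
  rw [PowerSeries.coeff_mul]
  have h1 : ∀ p ∈ Finset.HasAntidiagonal.antidiagonal N,
      coeff p.1 (PP 2 1 ε) * coeff p.2 (PP 2 1 ε)
        = ∑ S ∈ (Finset.range N).powerset, ∑ T ∈ (Finset.range N).powerset,
            (if owt S = p.1 then ε ^ S.card else 0) * (if owt T = p.2 then ε ^ T.card else 0) := by
    rintro ⟨i, j⟩ hij
    rw [Finset.HasAntidiagonal.mem_antidiagonal] at hij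
    dsimp only
    rw [coeff_PP21 ε (by omega : i ≤ N), coeff_PP21 ε (by omega : j ≤ N), Finset.sum_mul_sum]
  rw [Finset.sum_congr rfl h1, Finset.sum_comm]
  have h2 : ∀ S ∈ (Finset.range N).powerset,
      (∑ p ∈ Finset.HasAntidiagonal.antidiagonal N, ∑ T ∈ (Finset.range N).powerset,
        (if owt S = p.1 then ε ^ S.card else 0) * (if owt T = p.2 then ε ^ T.card else 0))
      = ∑ T ∈ (Finset.range N).powerset,
          if owt S + owt T = N then ε ^ (S.card + T.card) else 0 := by
    intro S _
    rw [Finset.sum_comm]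
    apply Finset.sum_congr rfl
    intro T _
    rw [sum_antidiagonal_pair2, pow_add]
  rw [Finset.sum_congr rfl h2, ← Finset.sum_product']
  rw [Wset, Finset.sum_filter]

/-- fiber decomposition by card difference -/
lemma fiber_decomp (N : ℕ) (F : Finset ℕ × Finset ℕ → ℚ) :
    ∑ p ∈ Wset N, F p = ∑ k ∈ Finset.Icc (-(N:ℤ)) N, ∑ p ∈ pset k N, F p := by
  symm
  apply Finset.sum_fiberwise_of_maps_to
  intro p hp
  rw [Wset, Finset.mem_filter, Finset.mem_product, Finset.mem_powerset, Finset.mem_powerset] at hp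
  obtain ⟨⟨h1, h2⟩, _⟩ := hp
  have c1 : p.1.card ≤ N := le_trans (Finset.card_le_card h1) (by rw [Finset.card_range])
  have c2 : p.2.card ≤ N := le_trans (Finset.card_le_card h2) (by rw [Finset.card_range])
  rw [Finset.mem_Icc]
  omega

lemma coeff_bS_k (k : ℤ) (N : ℕ) :
    coeff N (bS k)
      = if k.natAbs * k.natAbs ≤ N then ((pset 0 (N - k.natAbs * k.natAbs)).card : ℚ) else 0 := by
  rw [bS_natAbs, coeff_X_pow_mul'']
  split_ifs with h
  · rw [coeff_bS]
  · rfl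

/-- J1 -/
lemma J1 : PP 2 1 1 * PP 2 1 1 = phiS * bS 0 := by
  ext N
  rw [G0, fiber_decomp N, PowerSeries.coeff_mul]
  have hL : ∀ k ∈ Finset.Icc (-(N:ℤ)) N,
      (∑ p ∈ pset k N, (1:ℚ) ^ (p.1.card + p.2.card))
        = if k.natAbs * k.natAbs ≤ N then ((pset 0 (N - k.natAbs * k.natAbs)).card : ℚ) else 0 := by
    intro k _
    have : ∀ p ∈ pset k N, (1:ℚ) ^ (p.1.card + p.2.card) = 1 := fun p _ => one_pow _
    rw [Finset.sum_congr rfl this, Finset.sum_const, nsmul_eq_mul, mul_one, ← coeff_bS, coeff_bS_k]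
  rw [Finset.sum_congr rfl hL]
  have hR : ∀ p ∈ Finset.HasAntidiagonal.antidiagonal N,
      coeff p.1 phiS * coeff p.2 (bS 0)
        = ∑ k ∈ Finset.Icc (-(N:ℤ)) N,
            if k * k = (p.1 : ℤ) then ((pset 0 p.2).card : ℚ) else 0 := by
    rintro ⟨i, j⟩ hij
    rw [Finset.HasAntidiagonal.mem_antidiagonal] at hij
    dsimp only
    rw [phiS, coeff_mk, coeff_bS, sqc, sqc_ext (by omega : i ≤ N), Finset.sum_mul]
    apply Finset.sum_congr rfl
    intro k _
    split_ifs <;> simp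
  rw [Finset.sum_congr rfl hR, Finset.sum_comm]
  apply Finset.sum_congr rfl
  intro k _
  have key : ∀ p ∈ Finset.HasAntidiagonal.antidiagonal N,
      (if k * k = (p.1:ℤ) then ((pset 0 p.2).card : ℚ) else 0)
        = if p.1 = k.natAbs * k.natAbs then ((pset 0 p.2).card : ℚ) else 0 := by
    rintro ⟨i, j⟩ _
    dsimp only
    have hiff : (k * k = (i:ℤ)) ↔ (i = k.natAbs * k.natAbs) := by
      rw [← Int.natAbs_mul_self]
      omega
    simp only [hiff]
  rw [Finset.sum_congr rfl key,
    sum_antidiagonal_eq N (k.natAbs * k.natAbs) (fun j => ((pset 0 j).card : ℚ))]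

/-- J2 -/
lemma J2 : PP 2 1 (-1) * PP 2 1 (-1) = phimS * bS 0 := by
  ext N
  rw [G0, fiber_decomp N, PowerSeries.coeff_mul]
  have hL : ∀ k ∈ Finset.Icc (-(N:ℤ)) N,
      (∑ p ∈ pset k N, (-1:ℚ) ^ (p.1.card + p.2.card))
        = sgn k * (if k.natAbs * k.natAbs ≤ N then ((pset 0 (N - k.natAbs * k.natAbs)).card : ℚ) else 0) := by
    intro k _
    have hterm : ∀ p ∈ pset k N, (-1:ℚ) ^ (p.1.card + p.2.card) = sgn k := by
      intro p hp
      rw [pset, Finset.mem_filter] at hp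
      rw [neg_one_pow_eq_sgn, hp.2]
    rw [Finset.sum_congr rfl hterm, Finset.sum_const, nsmul_eq_mul, ← coeff_bS, coeff_bS_k]
    ring
  rw [Finset.sum_congr rfl hL]
  have hR : ∀ p ∈ Finset.HasAntidiagonal.antidiagonal N,
      coeff p.1 phimS * coeff p.2 (bS 0)
        = ∑ k ∈ Finset.Icc (-(N:ℤ)) N,
            if k * k = (p.1 : ℤ) then sgn k * ((pset 0 p.2).card : ℚ) else 0 := by
    rintro ⟨i, j⟩ hij
    rw [Finset.HasAntidiagonal.mem_antidiagonal] at hij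
    dsimp only
    rw [phimS, coeff_mk, coeff_bS, sqcm, sqc_ext (by omega : i ≤ N), Finset.sum_mul]
    apply Finset.sum_congr rfl
    intro k _
    split_ifs <;> simp
  rw [Finset.sum_congr rfl hR, Finset.sum_comm]
  apply Finset.sum_congr rfl
  intro k _
  have key : ∀ p ∈ Finset.HasAntidiagonal.antidiagonal N,
      (if k * k = (p.1:ℤ) then sgn k * ((pset 0 p.2).card : ℚ) else 0)
        = if p.1 = k.natAbs * k.natAbs then sgn k * ((pset 0 p.2).card : ℚ) else 0 := by
    rintro ⟨i, j⟩ _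
    dsimp only
    have hiff : (k * k = (i:ℤ)) ↔ (i = k.natAbs * k.natAbs) := by
      rw [← Int.natAbs_mul_self]
      omega
    simp only [hiff]
  rw [Finset.sum_congr rfl key,
    sum_antidiagonal_eq N (k.natAbs * k.natAbs) (fun j => sgn k * ((pset 0 j).card : ℚ))]
  split_ifs with h
  · rfl
  · ring


lemma sgn_add (x y : ℤ) : sgn (x + y) = sgn x * sgn y := by
  unfold sgn
  by_cases hx : Even x <;> by_cases hy : Even y <;>
    simp [hx, hy, Int.even_add] <;> intro h <;> tauto

lemma sgn_eq_of_even_sub {x y : ℤ} (h : Even (x - y)) : sgn x = sgn y := by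
  unfold sgn
  rw [Int.even_sub] at h
  by_cases hx : Even x
  · rw [if_pos hx, if_pos (h.1 hx)]
  · rw [if_neg hx, if_neg (fun hy => hx (h.2 hy))]

/-- general interval extension -/
lemma icc_ext {m M : ℕ} (h : m ≤ M) (P : ℤ → Prop) [DecidablePred P] (g : ℤ → ℚ)
    (hP : ∀ k, P k → k.natAbs ≤ m) :
    (∑ k ∈ Finset.Icc (-(m:ℤ)) m, if P k then g k else 0)
      = ∑ k ∈ Finset.Icc (-(M:ℤ)) M, if P k then g k else 0 := by
  apply Finset.sum_subset
  · apply Finset.Icc_subset_Icc <;> omega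
  · intro k hk hnk
    rw [if_neg]
    intro hkk
    have := hP k hkk
    apply hnk
    rw [Finset.mem_Icc]
    omega

/-- ℤ-condition antidiagonal collapse -/
lemma sum_antidiagonal_pairZ (n : ℕ) (A B : ℤ) (hA : 0 ≤ A) (hB : 0 ≤ B) (x y : ℚ) :
    (∑ p ∈ Finset.HasAntidiagonal.antidiagonal n,
      (if A = (p.1:ℤ) then x else 0) * (if B = (p.2:ℤ) then y else 0))
      = if A + B = (n:ℤ) then x * y else 0 := by
  have h1 : ∀ p ∈ Finset.HasAntidiagonal.antidiagonal n,
      (if A = (p.1:ℤ) then x else 0) * (if B = (p.2:ℤ) then y else 0)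
        = (if A.toNat = p.1 then x else 0) * (if B.toNat = p.2 then y else 0) := by
    intro p _
    have e1 : (A = (p.1:ℤ)) ↔ (A.toNat = p.1) := by omega
    have e2 : (B = (p.2:ℤ)) ↔ (B.toNat = p.2) := by omega
    simp only [e1, e2]
  rw [Finset.sum_congr rfl h1, sum_antidiagonal_pair2]
  have e3 : (A.toNat + B.toNat = n) ↔ (A + B = (n:ℤ)) := by omega
  by_cases h : A + B = (n:ℤ)
  · rw [if_pos (e3.2 h), if_pos h]
  · rw [if_neg (fun hh => h (e3.1 hh)), if_neg h]

/-- coefficient of phim as an extended sum -/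
lemma sqcm_ext {i N : ℕ} (h : i ≤ N) :
    sqcm i = ∑ k ∈ Finset.Icc (-(N:ℤ)) N, if k * k = (i:ℤ) then sgn k else 0 := by
  rw [sqcm]
  apply icc_ext h
  intro k hk
  have h1 := int_le_mul_self k
  have h2 := int_neg_le_mul_self k
  omega

lemma sqc_ext' {i N : ℕ} (h : i ≤ N) :
    sqc i = ∑ k ∈ Finset.Icc (-(N:ℤ)) N, if k * k = (i:ℤ) then (1:ℚ) else 0 := by
  rw [sqc]
  apply icc_ext h
  intro k hk
  have h1 := int_le_mul_self k
  have h2 := int_neg_le_mul_self k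
  omega

lemma coeff_E2phim {i N : ℕ} (h : i ≤ N) :
    coeff i (Ex 2 phimS)
      = ∑ u ∈ Finset.Icc (-(N:ℤ)) N, if 2 * (u * u) = (i:ℤ) then sgn u else 0 := by
  rw [coeff_Ex]
  by_cases hd : 2 ∣ i
  · obtain ⟨m, rfl⟩ := hd
    rw [if_pos ⟨m, rfl⟩, Nat.mul_div_cancel_left _ (by omega), phimS, coeff_mk]
    rw [sqcm_ext (show m ≤ N by omega)]
    apply Finset.sum_congr rfl
    intro u _
    have e : (u * u = (m:ℤ)) ↔ (2 * (u * u) = ((2 * m : ℕ):ℤ)) := by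
      push_cast; omega
    simp only [e]
  · rw [if_neg hd]
    symm
    apply Finset.sum_eq_zero
    intro u _
    rw [if_neg]
    intro hu
    exact hd ⟨(u*u).toNat, by omega⟩

/-- T5 -/
lemma T5 : phiS * phimS = Ex 2 phimS * Ex 2 phimS := by
  ext n
  rw [PowerSeries.coeff_mul, PowerSeries.coeff_mul]
  set I := Finset.Icc (-(n:ℤ)) n with hI
  -- LHS
  have hL : ∀ p ∈ Finset.HasAntidiagonal.antidiagonal n,
      coeff p.1 phiS * coeff p.2 phimS
        = ∑ a ∈ I, ∑ b ∈ I,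
            (if a * a = (p.1:ℤ) then (1:ℚ) else 0) * (if b * b = (p.2:ℤ) then sgn b else 0) := by
    rintro ⟨i, j⟩ hij
    rw [Finset.HasAntidiagonal.mem_antidiagonal] at hij
    dsimp only
    rw [phiS, phimS, coeff_mk, coeff_mk, sqc_ext' (show i ≤ n by omega),
      sqcm_ext (show j ≤ n by omega), Finset.sum_mul_sum]
  have hR : ∀ p ∈ Finset.HasAntidiagonal.antidiagonal n,
      coeff p.1 (Ex 2 phimS) * coeff p.2 (Ex 2 phimS)
        = ∑ u ∈ I, ∑ v ∈ I,
            (if 2*(u*u) = (p.1:ℤ) then sgn u else 0) * (if 2*(v*v) = (p.2:ℤ) then sgn v else 0) := by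
    rintro ⟨i, j⟩ hij
    rw [Finset.HasAntidiagonal.mem_antidiagonal] at hij
    dsimp only
    rw [coeff_E2phim (show i ≤ n by omega), coeff_E2phim (show j ≤ n by omega),
      Finset.sum_mul_sum]
  rw [Finset.sum_congr rfl hL, Finset.sum_congr rfl hR, Finset.sum_comm, Finset.sum_comm (s := Finset.HasAntidiagonal.antidiagonal n)]
  -- now collapse inner antidiagonal sums
  have hL2 : ∀ a ∈ I,
      (∑ p ∈ Finset.HasAntidiagonal.antidiagonal n, ∑ b ∈ I,
        (if a * a = (p.1:ℤ) then (1:ℚ) else 0) * (if b * b = (p.2:ℤ) then sgn b else 0))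
      = ∑ b ∈ I, if a*a + b*b = (n:ℤ) then sgn b else 0 := by
    intro a _
    rw [Finset.sum_comm]
    apply Finset.sum_congr rfl
    intro b _
    rw [sum_antidiagonal_pairZ n _ _ (mul_self_nonneg a) (mul_self_nonneg b), one_mul]
  have hR2 : ∀ u ∈ I,
      (∑ p ∈ Finset.HasAntidiagonal.antidiagonal n, ∑ v ∈ I,
        (if 2*(u*u) = (p.1:ℤ) then sgn u else 0) * (if 2*(v*v) = (p.2:ℤ) then sgn v else 0))
      = ∑ v ∈ I, if 2*(u*u) + 2*(v*v) = (n:ℤ) then sgn u * sgn v else 0 := by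
    intro u _
    rw [Finset.sum_comm]
    apply Finset.sum_congr rfl
    intro v _
    rw [sum_antidiagonal_pairZ n _ _ (by have := mul_self_nonneg u; omega)
      (by have := mul_self_nonneg v; omega)]
  rw [Finset.sum_congr rfl hL2, Finset.sum_congr rfl hR2, ← Finset.sum_product', ← Finset.sum_product']
  -- core combinatorial step
  rw [← Finset.sum_filter, ← Finset.sum_filter]
  -- split left side by parity of a + b
  rw [show ((I ×ˢ I).filter fun p => p.1*p.1 + p.2*p.2 = (n:ℤ))
      = (((I ×ˢ I).filter fun p => p.1*p.1 + p.2*p.2 = (n:ℤ)).filter fun p => Even (p.1 + p.2))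
        ∪ (((I ×ˢ I).filter fun p => p.1*p.1 + p.2*p.2 = (n:ℤ)).filter fun p => ¬ Even (p.1 + p.2))
      from (Finset.filter_union_filter_not_eq _ _).symm,
    Finset.sum_union (Finset.disjoint_filter_filter_not _ _ _)]
  have hodd : (∑ p ∈ ((I ×ˢ I).filter fun p => p.1*p.1 + p.2*p.2 = (n:ℤ)).filter
      (fun p => ¬ Even (p.1 + p.2)), sgn p.2) = 0 := by
    set s := ((I ×ˢ I).filter fun p => p.1*p.1 + p.2*p.2 = (n:ℤ)).filter
      (fun p => ¬ Even (p.1 + p.2)) with hs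
    have hmem : ∀ p ∈ s, p.swap ∈ s := by
      rintro ⟨a, b⟩ hp
      simp only [hs, Finset.mem_filter, Finset.mem_product, Prod.swap_prod_mk] at hp ⊢
      refine ⟨⟨⟨hp.1.1.2, hp.1.1.1⟩, by linarith [hp.1.2]⟩, ?_⟩
      intro h
      exact hp.2 (by rwa [add_comm] at h)
    have hswap : (∑ p ∈ s, sgn p.2) = ∑ p ∈ s, -(sgn p.2) := by
      apply Finset.sum_nbij' Prod.swap Prod.swap hmem hmem
      · rintro ⟨a, b⟩ _; rfl
      · rintro ⟨a, b⟩ _; rfl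
      · rintro ⟨a, b⟩ hp
        simp only [hs, Finset.mem_filter, Finset.mem_product] at hp
        dsimp only [Prod.swap_prod_mk]
        have hodd2 : ¬ Even ((a:ℤ) + b) := hp.2
        unfold sgn
        rw [Int.even_add] at hodd2
        by_cases ha : Even a
        · have hb : ¬ Even b := fun hb => hodd2 (iff_of_true ha hb)
          rw [if_neg hb, if_pos ha]
        · have hb : Even b := by
            by_contra hb
            exact hodd2 (iff_of_false ha hb)
          rw [if_pos hb, if_neg ha, neg_neg]
    rw [Finset.sum_neg_distrib] at hswap
    linarith
  rw [hodd, add_zero]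
  -- even part: bijection
  apply Finset.sum_nbij' (fun p => ((p.1 + p.2)/2, (p.1 - p.2)/2)) (fun q => (q.1 + q.2, q.1 - q.2))
  · rintro ⟨a, b⟩ hp
    simp only [hI, Finset.mem_filter, Finset.mem_product, Finset.mem_Icc] at hp ⊢
    obtain ⟨⟨⟨ha, hb⟩, heq⟩, hev⟩ := hp
    obtain ⟨w, hw⟩ := hev
    have hu : (a + b)/2 = w := by omega
    have hv : (a - b)/2 = w - b := by omega
    rw [hu, hv]
    have heq2 : 2*(w*w) + 2*((w-b)*(w-b)) = (n:ℤ) := by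
      linear_combination heq - (a - b + 2*w) * hw
    have b1 : w * w ≤ (n:ℤ) := by nlinarith [mul_self_nonneg (w - b)]
    have b2 : (w-b)*(w-b) ≤ (n:ℤ) := by nlinarith [mul_self_nonneg w]
    have i1 := int_le_mul_self w
    have i2 := int_neg_le_mul_self w
    have i3 := int_le_mul_self (w - b)
    have i4 := int_neg_le_mul_self (w - b)
    exact ⟨⟨⟨by omega, by omega⟩, by omega, by omega⟩, heq2⟩
  · rintro ⟨u, v⟩ hq
    simp only [hI, Finset.mem_filter, Finset.mem_product, Finset.mem_Icc] at hq ⊢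
    obtain ⟨⟨hu, hv⟩, heq⟩ := hq
    have heq2 : (u+v)*(u+v) + (u-v)*(u-v) = (n:ℤ) := by linear_combination heq
    have b1 : (u+v)*(u+v) ≤ (n:ℤ) := by nlinarith [mul_self_nonneg (u - v)]
    have b2 : (u-v)*(u-v) ≤ (n:ℤ) := by nlinarith [mul_self_nonneg (u + v)]
    have i1 := int_le_mul_self (u+v)
    have i2 := int_neg_le_mul_self (u+v)
    have i3 := int_le_mul_self (u-v)
    have i4 := int_neg_le_mul_self (u-v)
    exact ⟨⟨⟨⟨by omega, by omega⟩, ⟨by omega, by omega⟩⟩, heq2⟩, ⟨u, by ring⟩⟩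
  · rintro ⟨a, b⟩ hp
    simp only [Finset.mem_filter] at hp
    obtain ⟨w, hw⟩ := hp.2
    simp only [Prod.mk.injEq]
    constructor <;> omega
  · rintro ⟨u, v⟩ _
    simp only [Prod.mk.injEq]
    constructor <;> omega
  · rintro ⟨a, b⟩ hp
    simp only [Finset.mem_filter] at hp
    obtain ⟨w, hw⟩ := hp.2
    dsimp only
    have hu : ((a:ℤ) + b)/2 = w := by omega
    have hv : ((a:ℤ) - b)/2 = w - b := by omega
    rw [hu, hv, ← sgn_add]
    exact sgn_eq_of_even_sub ⟨b - w, by ring⟩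


lemma tric_ext {i N : ℕ} (h : i ≤ N) :
    tric i = ∑ a ∈ Finset.range (N+1), if a * (a+1) = 2 * i then (1:ℚ) else 0 := by
  rw [tric]
  apply Finset.sum_subset
  · intro a ha; rw [Finset.mem_range] at *; omega
  · intro a ha hna
    rw [Finset.mem_range] at ha hna
    rw [if_neg]
    intro haa
    have h1 : i + 1 ≤ a := by omega
    nlinarith

lemma coeff_E2psi {j N : ℕ} (h : j ≤ N) :
    coeff j (Ex 2 psiS) = ∑ c ∈ Finset.range (N+1), if c * (c+1) = j then (1:ℚ) else 0 := by
  rw [coeff_Ex]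
  by_cases hd : 2 ∣ j
  · obtain ⟨t, rfl⟩ := hd
    rw [if_pos ⟨t, rfl⟩, Nat.mul_div_cancel_left _ (by omega), psiS, coeff_mk,
      tric_ext (show t ≤ N by omega)]
  · rw [if_neg hd]
    symm
    apply Finset.sum_eq_zero
    intro c _
    rw [if_neg]
    intro hc
    obtain ⟨w, hw⟩ := Nat.even_mul_succ_self c
    omega

lemma sum_antidiagonal_pairHalf (n A B : ℕ) (hA : Even A) (hB : Even B) (x y : ℚ) :
    (∑ p ∈ Finset.HasAntidiagonal.antidiagonal n,
      (if A = 2 * p.1 then x else 0) * (if B = 2 * p.2 then y else 0))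
      = if A + B = 2 * n then x * y else 0 := by
  obtain ⟨a, ha⟩ := hA
  obtain ⟨b, hb⟩ := hB
  have h1 : ∀ p ∈ Finset.HasAntidiagonal.antidiagonal n,
      (if A = 2 * p.1 then x else 0) * (if B = 2 * p.2 then y else 0)
        = (if a = p.1 then x else 0) * (if b = p.2 then y else 0) := by
    intro p _
    have e1 : (A = 2 * p.1) ↔ (a = p.1) := by omega
    have e2 : (B = 2 * p.2) ↔ (b = p.2) := by omega
    simp only [e1, e2]
  rw [Finset.sum_congr rfl h1, sum_antidiagonal_pair2]
  have e3 : (a + b = n) ↔ (A + B = 2 * n) := by omega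
  by_cases hc : a + b = n
  · rw [if_pos hc, if_pos (e3.1 hc)]
  · rw [if_neg hc, if_neg (fun hh => hc (e3.2 hh))]

/-- forward map for T1 -/
def t1f (p : ℕ × ℕ) : ℤ × ℕ :=
  if (p.1 + p.2) % 2 = 0 then (((p.1:ℤ) - p.2)/2, (p.1 + p.2)/2)
  else if p.2 < p.1 then (((p.1:ℤ) + p.2 + 1)/2, (p.1 - p.2 - 1)/2)
  else (-(((p.1:ℤ) + p.2 + 1)/2), (p.2 - p.1 - 1)/2)

/-- backward map for T1 -/
def t1g (q : ℤ × ℕ) : ℕ × ℕ :=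
  if q.1.natAbs ≤ q.2 then (((q.2:ℤ) + q.1).toNat, ((q.2:ℤ) - q.1).toNat)
  else if 0 ≤ q.1 then (q.1.toNat + q.2, q.1.toNat - 1 - q.2)
  else ((-q.1).toNat - 1 - q.2, (-q.1).toNat + q.2)

set_option maxHeartbeats 2000000 in
lemma T1core (n : ℕ) :
    (∑ p ∈ ((Finset.range (n+1)) ×ˢ (Finset.range (n+1))).filter
        (fun p => p.1 * (p.1+1) + p.2 * (p.2+1) = 2 * n), (1:ℚ))
      = ∑ q ∈ ((Finset.Icc (-(n:ℤ)) n) ×ˢ (Finset.range (n+1))).filter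
          (fun q => q.1 * q.1 + (q.2 * (q.2+1) : ℕ) = (n:ℤ)), (1:ℚ) := by
  apply Finset.sum_nbij' t1f t1g
  · -- t1f maps in
    rintro ⟨a, b⟩ hp
    simp only [Finset.mem_filter, Finset.mem_product, Finset.mem_range, Finset.mem_Icc] at hp ⊢
    obtain ⟨⟨ha, hb⟩, heq⟩ := hp
    have heqZ : (a:ℤ) * (a+1) + (b:ℤ) * (b+1) = 2 * n := by exact_mod_cast heq
    rw [t1f]
    by_cases h2 : (a + b) % 2 = 0
    · rw [if_pos h2]
      dsimp only
      set k : ℤ := ((a:ℤ) - b)/2 with hkdef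
      set c : ℕ := (a + b)/2 with hcdef
      have hk : 2 * k = (a:ℤ) - b := by omega
      have hc : 2 * (c:ℤ) = (a:ℤ) + b := by omega
      have E4 : 4 * (k*k + (c:ℤ)*((c:ℤ)+1)) = 4 * n := by
        linear_combination 2*heqZ + (2*k + (a:ℤ) - b)*hk + (2*(c:ℤ) + a + b + 2)*hc
      have E : k*k + (c:ℤ)*((c:ℤ)+1) = (n:ℤ) := by linarith
      have hcc : (0:ℤ) ≤ (c:ℤ)*((c:ℤ)+1) := by positivity
      have hkk : k*k ≤ (n:ℤ) := by linarith
      have hc2 : (c:ℤ) ≤ (c:ℤ)*((c:ℤ)+1) := by nlinarith [mul_self_nonneg (c:ℤ)]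
      have i1 := int_le_mul_self k
      have i2 := int_neg_le_mul_self k
      refine ⟨⟨⟨by omega, by omega⟩, by omega⟩, ?_⟩
      push_cast
      linear_combination E
    · rw [if_neg h2]
      by_cases hba : b < a
      · rw [if_pos hba]
        dsimp only
        set k : ℤ := ((a:ℤ) + b + 1)/2 with hkdef
        set c : ℕ := (a - b - 1)/2 with hcdef
        have hk : 2 * k = (a:ℤ) + b + 1 := by omega
        have hc : 2 * (c:ℤ) = (a:ℤ) - b - 1 := by omega
        have E4 : 4 * (k*k + (c:ℤ)*((c:ℤ)+1)) = 4 * n := by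
          linear_combination 2*heqZ + (2*k + (a:ℤ) + b + 1)*hk + (2*(c:ℤ) + a - b + 1)*hc
        have E : k*k + (c:ℤ)*((c:ℤ)+1) = (n:ℤ) := by linarith
        have hcc : (0:ℤ) ≤ (c:ℤ)*((c:ℤ)+1) := by positivity
        have hkk : k*k ≤ (n:ℤ) := by linarith
        have hc2 : (c:ℤ) ≤ (c:ℤ)*((c:ℤ)+1) := by nlinarith [mul_self_nonneg (c:ℤ)]
        have i1 := int_le_mul_self k
        have i2 := int_neg_le_mul_self k
        refine ⟨⟨⟨by omega, by omega⟩, by omega⟩, ?_⟩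
        push_cast
        linear_combination E
      · rw [if_neg hba]
        dsimp only
        set k : ℤ := -(((a:ℤ) + b + 1)/2) with hkdef
        set c : ℕ := (b - a - 1)/2 with hcdef
        have hk : 2 * k = -((a:ℤ) + b + 1) := by omega
        have hc : 2 * (c:ℤ) = (b:ℤ) - a - 1 := by omega
        have E4 : 4 * (k*k + (c:ℤ)*((c:ℤ)+1)) = 4 * n := by
          linear_combination 2*heqZ + (2*k - ((a:ℤ) + b + 1))*hk + (2*(c:ℤ) + b - a + 1)*hc
        have E : k*k + (c:ℤ)*((c:ℤ)+1) = (n:ℤ) := by linarith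
        have hcc : (0:ℤ) ≤ (c:ℤ)*((c:ℤ)+1) := by positivity
        have hkk : k*k ≤ (n:ℤ) := by linarith
        have hc2 : (c:ℤ) ≤ (c:ℤ)*((c:ℤ)+1) := by nlinarith [mul_self_nonneg (c:ℤ)]
        have i1 := int_le_mul_self k
        have i2 := int_neg_le_mul_self k
        refine ⟨⟨⟨by omega, by omega⟩, by omega⟩, ?_⟩
        push_cast
        linear_combination E
  · -- t1g maps in
    rintro ⟨k, c⟩ hq
    simp only [Finset.mem_filter, Finset.mem_product, Finset.mem_range, Finset.mem_Icc] at hq ⊢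
    obtain ⟨⟨hk, hc⟩, heq⟩ := hq
    have heqZ : k * k + (c:ℤ)*((c:ℤ)+1) = (n:ℤ) := by push_cast at heq ⊢; linear_combination heq
    have hn0 : (0:ℤ) ≤ (n:ℤ) := by positivity
    rw [t1g]
    by_cases h1 : k.natAbs ≤ c
    · rw [if_pos h1]
      dsimp only
      set a : ℕ := ((c:ℤ) + k).toNat with hadef
      set b : ℕ := ((c:ℤ) - k).toNat with hbdef
      have haZ : (a:ℤ) = (c:ℤ) + k := by omega
      have hbZ : (b:ℤ) = (c:ℤ) - k := by omega
      have EZ : (a:ℤ)*((a:ℤ)+1) + (b:ℤ)*((b:ℤ)+1) = 2*(n:ℤ) := by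
        rw [haZ, hbZ]; linear_combination 2*heqZ
      have hE : a*(a+1) + b*(b+1) = 2*n := by exact_mod_cast EZ
      have hale : (a:ℤ) ≤ n := by nlinarith [mul_self_nonneg ((a:ℤ) - 1), mul_self_nonneg ((b:ℤ) - 1)]
      have hble : (b:ℤ) ≤ n := by nlinarith [mul_self_nonneg ((a:ℤ) - 1), mul_self_nonneg ((b:ℤ) - 1)]
      exact ⟨⟨by omega, by omega⟩, hE⟩
    · rw [if_neg h1]
      by_cases h2 : 0 ≤ k
      · rw [if_pos h2]
        dsimp only
        set a : ℕ := k.toNat + c with hadef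
        set b : ℕ := k.toNat - 1 - c with hbdef
        have haZ : (a:ℤ) = k + c := by omega
        have hbZ : (b:ℤ) = k - 1 - c := by omega
        have EZ : (a:ℤ)*((a:ℤ)+1) + (b:ℤ)*((b:ℤ)+1) = 2*(n:ℤ) := by
          rw [haZ, hbZ]; linear_combination 2*heqZ
        have hE : a*(a+1) + b*(b+1) = 2*n := by exact_mod_cast EZ
        have hale : (a:ℤ) ≤ n := by nlinarith [mul_self_nonneg ((a:ℤ) - 1), mul_self_nonneg ((b:ℤ) - 1)]
        have hble : (b:ℤ) ≤ n := by nlinarith [mul_self_nonneg ((a:ℤ) - 1), mul_self_nonneg ((b:ℤ) - 1)]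
        exact ⟨⟨by omega, by omega⟩, hE⟩
      · rw [if_neg h2]
        dsimp only
        set a : ℕ := (-k).toNat - 1 - c with hadef
        set b : ℕ := (-k).toNat + c with hbdef
        have haZ : (a:ℤ) = -k - 1 - c := by omega
        have hbZ : (b:ℤ) = -k + c := by omega
        have EZ : (a:ℤ)*((a:ℤ)+1) + (b:ℤ)*((b:ℤ)+1) = 2*(n:ℤ) := by
          rw [haZ, hbZ]; linear_combination 2*heqZ
        have hE : a*(a+1) + b*(b+1) = 2*n := by exact_mod_cast EZ
        have hale : (a:ℤ) ≤ n := by nlinarith [mul_self_nonneg ((a:ℤ) - 1), mul_self_nonneg ((b:ℤ) - 1)]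
        have hble : (b:ℤ) ≤ n := by nlinarith [mul_self_nonneg ((a:ℤ) - 1), mul_self_nonneg ((b:ℤ) - 1)]
        exact ⟨⟨by omega, by omega⟩, hE⟩
  · -- left inverse
    rintro ⟨a, b⟩ hp
    rw [t1f]
    by_cases h2 : (a + b) % 2 = 0
    · rw [if_pos h2]
      rw [t1g]
      dsimp only
      have hbranch : (((a:ℤ) - b)/2).natAbs ≤ (a + b)/2 := by omega
      rw [if_pos hbranch]
      simp only [Prod.mk.injEq]
      constructor <;> omega
    · rw [if_neg h2]
      by_cases hba : b < a
      · rw [if_pos hba]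
        rw [t1g]
        dsimp only
        have hbranch : ¬ ((((a:ℤ) + b + 1)/2).natAbs ≤ (a - b - 1)/2) := by omega
        rw [if_neg hbranch, if_pos (by omega : (0:ℤ) ≤ ((a:ℤ) + b + 1)/2)]
        simp only [Prod.mk.injEq]
        constructor <;> omega
      · rw [if_neg hba]
        rw [t1g]
        dsimp only
        have hbranch : ¬ ((-(((a:ℤ) + b + 1)/2)).natAbs ≤ (b - a - 1)/2) := by omega
        rw [if_neg hbranch, if_neg (by omega : ¬ (0:ℤ) ≤ -(((a:ℤ) + b + 1)/2))]
        simp only [Prod.mk.injEq]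
        constructor <;> omega
  · -- right inverse
    rintro ⟨k, c⟩ hq
    simp only [Finset.mem_filter, Finset.mem_product, Finset.mem_range, Finset.mem_Icc] at hq
    rw [t1g]
    by_cases h1 : k.natAbs ≤ c
    · rw [if_pos h1]
      rw [t1f]
      dsimp only
      have hpar : (((c:ℤ) + k).toNat + ((c:ℤ) - k).toNat) % 2 = 0 := by omega
      rw [if_pos hpar]
      simp only [Prod.mk.injEq]
      constructor <;> omega
    · rw [if_neg h1]
      by_cases h2 : 0 ≤ k
      · rw [if_pos h2]
        rw [t1f]
        dsimp only
        have hpar : ¬ ((k.toNat + c + (k.toNat - 1 - c)) % 2 = 0) := by omega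
        rw [if_neg hpar, if_pos (by omega : k.toNat - 1 - c < k.toNat + c)]
        simp only [Prod.mk.injEq]
        constructor <;> omega
      · rw [if_neg h2]
        rw [t1f]
        dsimp only
        have hpar : ¬ (((-k).toNat - 1 - c + ((-k).toNat + c)) % 2 = 0) := by omega
        rw [if_neg hpar, if_neg (by omega : ¬ ((-k).toNat + c < (-k).toNat - 1 - c))]
        simp only [Prod.mk.injEq]
        constructor <;> omega
  · intro p _; rfl

/-- T1 -/
lemma T1 : psiS * psiS = phiS * Ex 2 psiS := by
  ext n
  rw [PowerSeries.coeff_mul, PowerSeries.coeff_mul]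
  have hL : ∀ p ∈ Finset.HasAntidiagonal.antidiagonal n,
      coeff p.1 psiS * coeff p.2 psiS
        = ∑ a ∈ Finset.range (n+1), ∑ b ∈ Finset.range (n+1),
            (if a*(a+1) = 2*p.1 then (1:ℚ) else 0) * (if b*(b+1) = 2*p.2 then (1:ℚ) else 0) := by
    rintro ⟨i, j⟩ hij
    rw [Finset.HasAntidiagonal.mem_antidiagonal] at hij
    dsimp only
    rw [psiS, coeff_mk, coeff_mk, tric_ext (show i ≤ n by omega), tric_ext (show j ≤ n by omega),
      Finset.sum_mul_sum]
  have hR : ∀ p ∈ Finset.HasAntidiagonal.antidiagonal n,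
      coeff p.1 phiS * coeff p.2 (Ex 2 psiS)
        = ∑ k ∈ Finset.Icc (-(n:ℤ)) n, ∑ c ∈ Finset.range (n+1),
            (if k*k = (p.1:ℤ) then (1:ℚ) else 0) * (if c*(c+1) = p.2 then (1:ℚ) else 0) := by
    rintro ⟨i, j⟩ hij
    rw [Finset.HasAntidiagonal.mem_antidiagonal] at hij
    dsimp only
    rw [phiS, coeff_mk, sqc_ext' (show i ≤ n by omega), coeff_E2psi (show j ≤ n by omega),
      Finset.sum_mul_sum]
  rw [Finset.sum_congr rfl hL, Finset.sum_congr rfl hR, Finset.sum_comm,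
    Finset.sum_comm (s := Finset.HasAntidiagonal.antidiagonal n)]
  have hL2 : ∀ a ∈ Finset.range (n+1),
      (∑ p ∈ Finset.HasAntidiagonal.antidiagonal n, ∑ b ∈ Finset.range (n+1),
        (if a*(a+1) = 2*p.1 then (1:ℚ) else 0) * (if b*(b+1) = 2*p.2 then (1:ℚ) else 0))
      = ∑ b ∈ Finset.range (n+1), if a*(a+1) + b*(b+1) = 2*n then (1:ℚ) else 0 := by
    intro a _
    rw [Finset.sum_comm]
    apply Finset.sum_congr rfl
    intro b _
    rw [sum_antidiagonal_pairHalf n _ _ (Nat.even_mul_succ_self a) (Nat.even_mul_succ_self b),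
      one_mul]
  have hR2 : ∀ k ∈ Finset.Icc (-(n:ℤ)) n,
      (∑ p ∈ Finset.HasAntidiagonal.antidiagonal n, ∑ c ∈ Finset.range (n+1),
        (if k*k = (p.1:ℤ) then (1:ℚ) else 0) * (if c*(c+1) = p.2 then (1:ℚ) else 0))
      = ∑ c ∈ Finset.range (n+1), if k*k + (c*(c+1):ℕ) = (n:ℤ) then (1:ℚ) else 0 := by
    intro k _
    rw [Finset.sum_comm]
    apply Finset.sum_congr rfl
    intro c _
    have h1 : ∀ p ∈ Finset.HasAntidiagonal.antidiagonal n,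
        (if k*k = (p.1:ℤ) then (1:ℚ) else 0) * (if c*(c+1) = p.2 then (1:ℚ) else 0)
          = (if k*k = (p.1:ℤ) then (1:ℚ) else 0) * (if ((c*(c+1):ℕ):ℤ) = (p.2:ℤ) then (1:ℚ) else 0) := by
      intro p _
      have e : (c*(c+1) = p.2) ↔ (((c*(c+1):ℕ):ℤ) = (p.2:ℤ)) := by omega
      simp only [e]
    rw [Finset.sum_congr rfl h1,
      sum_antidiagonal_pairZ n _ _ (mul_self_nonneg k) (by positivity), one_mul]
  rw [Finset.sum_congr rfl hL2, Finset.sum_congr rfl hR2, ← Finset.sum_product',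
    ← Finset.sum_product', ← Finset.sum_filter, ← Finset.sum_filter]
  exact T1core n


lemma coeff_two_X_mul (f : PowerSeries ℚ) (n : ℕ) :
    coeff n (2 * X * f) = if 1 ≤ n then 2 * coeff (n-1) f else 0 := by
  have h : (2 : PowerSeries ℚ) * X * f = PowerSeries.C 2 * ((X:PowerSeries ℚ)^1 * f) := by
    rw [pow_one]
    rw [show PowerSeries.C 2 = (2 : PowerSeries ℚ) from map_ofNat (PowerSeries.C : ℚ →+* PowerSeries ℚ) 2]
    ring
  rw [h, PowerSeries.coeff_C_mul, coeff_X_pow_mul'']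
  split_ifs <;> ring

lemma T2even (n : ℕ) :
    (∑ k ∈ (Finset.Icc (-(n:ℤ)) n).filter (fun k => Even k),
        if k * k = (n:ℤ) then (1:ℚ) else 0)
      = coeff n (Ex 4 phiS) := by
  rw [coeff_Ex]
  by_cases h4 : 4 ∣ n
  · obtain ⟨m, rfl⟩ := h4
    rw [if_pos ⟨m, rfl⟩, Nat.mul_div_cancel_left _ (by omega), phiS, coeff_mk, sqc]
    rw [← Finset.sum_filter, ← Finset.sum_filter]
    symm
    apply Finset.sum_nbij' (fun u => 2*u) (fun k => k/2)
    · intro u hu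
      simp only [Finset.mem_filter, Finset.mem_Icc] at hu ⊢
      obtain ⟨⟨h1, h2⟩, heq⟩ := hu
      have i1 := int_le_mul_self u
      have i2 := int_neg_le_mul_self u
      refine ⟨⟨⟨by omega, by omega⟩, ⟨u, by ring⟩⟩, ?_⟩
      push_cast
      linear_combination 4*heq
    · intro k hk
      simp only [Finset.mem_filter, Finset.mem_Icc] at hk ⊢
      obtain ⟨⟨⟨h1, h2⟩, hev⟩, heq⟩ := hk
      obtain ⟨u, hu⟩ := hev
      have hk2 : k = 2*u := by omega
      have heqZ : k * k = ((4*m : ℕ):ℤ) := heq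
      have hu4 : 4*(u*u) = 4*(m:ℤ) := by
        push_cast at heqZ
        linear_combination heqZ - (k + 2*u)*hk2
      have hum : u*u = (m:ℤ) := by linarith
      have i1 := int_le_mul_self u
      have i2 := int_neg_le_mul_self u
      have hdiv : k/2 = u := by omega
      rw [hdiv]
      exact ⟨⟨by omega, by omega⟩, hum⟩
    · intro u hu
      omega
    · intro k hk
      simp only [Finset.mem_filter] at hk
      obtain ⟨⟨_, hev⟩, _⟩ := hk
      obtain ⟨u, hu⟩ := hev
      omega
    · intro u _
      rfl
  · rw [if_neg h4]
    apply Finset.sum_eq_zero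
    intro k hk
    simp only [Finset.mem_filter] at hk
    obtain ⟨_, ⟨u, hu⟩⟩ := hk
    rw [if_neg]
    intro heq
    have h1 : (n:ℤ) = 4*(u*u) := by linear_combination -heq + (k + u + u)*hu
    have h2 := mul_self_nonneg u
    apply h4
    obtain ⟨t, ht1, ht2⟩ : ∃ t : ℤ, 0 ≤ t ∧ (n:ℤ) = 4*t := ⟨u*u, h2, h1⟩
    omega

lemma T2odd (n : ℕ) :
    (∑ k ∈ (Finset.Icc (-(n:ℤ)) n).filter (fun k => ¬ Even k),
        if k * k = (n:ℤ) then (1:ℚ) else 0)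
      = 2 * ∑ c ∈ Finset.range (n+1), if (2*c+1)*(2*c+1) = n then (1:ℚ) else 0 := by
  set sOdd := (Finset.Icc (-(n:ℤ)) n).filter (fun k => ¬ Even k) with hsOdd
  rw [← Finset.sum_filter_add_sum_filter_not sOdd (fun k => 0 < k)]
  rw [← Finset.sum_filter, ← Finset.sum_filter, ← Finset.sum_filter]
  have hplus : ((sOdd.filter (fun k => 0 < k)).filter (fun k => k*k = (n:ℤ))).card
      = ((Finset.range (n+1)).filter (fun c => (2*c+1)*(2*c+1) = n)).card := by
    apply Finset.card_nbij' (fun (k:ℤ) => ((k - 1)/2).toNat) (fun (c:ℕ) => 2*(c:ℤ)+1)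
    · intro k hk
      simp only [hsOdd, Finset.mem_coe, Finset.mem_filter, Finset.mem_Icc, Finset.mem_range] at hk ⊢
      obtain ⟨⟨⟨⟨h1, h2⟩, hodd⟩, hpos⟩, heq⟩ := hk
      have i1 := int_le_mul_self k
      have hoddk : ¬ (2 ∣ k) := by
        intro ⟨u, hu⟩
        exact hodd ⟨u, by omega⟩
      set c : ℕ := ((k - 1)/2).toNat with hc
      have hcZ : 2*(c:ℤ) + 1 = k := by omega
      constructor
      · omega
      · have : ((2*c+1 : ℕ) : ℤ) * ((2*c+1 : ℕ) : ℤ) = (n:ℤ) := by push_cast; rw [hcZ]; exact heq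
        exact_mod_cast this
    · intro c hc
      simp only [hsOdd, Finset.mem_coe, Finset.mem_filter, Finset.mem_Icc, Finset.mem_range] at hc ⊢
      obtain ⟨hlt, heq⟩ := hc
      have heqZ : (2*(c:ℤ)+1) * (2*(c:ℤ)+1) = (n:ℤ) := by exact_mod_cast heq
      have i1 := int_le_mul_self (2*(c:ℤ)+1)
      refine ⟨⟨⟨⟨by omega, by omega⟩, ?_⟩, by omega⟩, heqZ⟩
      intro ⟨u, hu⟩
      omega
    · intro k hk
      simp only [hsOdd, Finset.mem_coe, Finset.mem_filter] at hk
      obtain ⟨⟨⟨_, hodd⟩, hpos⟩, _⟩ := hk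
      have hoddk : ¬ (2 ∣ k) := by
        intro ⟨u, hu⟩
        exact hodd ⟨u, by omega⟩
      dsimp only; omega
    · intro c _
      dsimp only; omega
  have hminus : ((sOdd.filter (fun k => ¬ 0 < k)).filter (fun k => k*k = (n:ℤ))).card
      = ((Finset.range (n+1)).filter (fun c => (2*c+1)*(2*c+1) = n)).card := by
    apply Finset.card_nbij' (fun (k:ℤ) => ((-k - 1)/2).toNat) (fun (c:ℕ) => -(2*(c:ℤ)+1))
    · intro k hk
      simp only [hsOdd, Finset.mem_coe, Finset.mem_filter, Finset.mem_Icc, Finset.mem_range] at hk ⊢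
      obtain ⟨⟨⟨⟨h1, h2⟩, hodd⟩, hpos⟩, heq⟩ := hk
      have i1 := int_neg_le_mul_self k
      have hoddk : ¬ (2 ∣ k) := by
        intro ⟨u, hu⟩
        exact hodd ⟨u, by omega⟩
      set c : ℕ := ((-k - 1)/2).toNat with hc
      have hcZ : 2*(c:ℤ) + 1 = -k := by omega
      constructor
      · omega
      · have : ((2*c+1 : ℕ) : ℤ) * ((2*c+1 : ℕ) : ℤ) = (n:ℤ) := by
          push_cast
          rw [hcZ]
          linear_combination heq
        exact_mod_cast this
    · intro c hc
      simp only [hsOdd, Finset.mem_coe, Finset.mem_filter, Finset.mem_Icc, Finset.mem_range] at hc ⊢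
      obtain ⟨hlt, heq⟩ := hc
      have heqZ : (2*(c:ℤ)+1) * (2*(c:ℤ)+1) = (n:ℤ) := by exact_mod_cast heq
      have i1 := int_le_mul_self (2*(c:ℤ)+1)
      refine ⟨⟨⟨⟨by omega, by omega⟩, ?_⟩, by omega⟩, by linear_combination heqZ⟩
      intro ⟨u, hu⟩
      omega
    · intro k hk
      simp only [hsOdd, Finset.mem_coe, Finset.mem_filter] at hk
      obtain ⟨⟨⟨_, hodd⟩, hpos⟩, _⟩ := hk
      have hoddk : ¬ (2 ∣ k) := by
        intro ⟨u, hu⟩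
        exact hodd ⟨u, by omega⟩
      dsimp only; omega
    · intro c _
      dsimp only; omega
  have e1 : ∀ s : Finset ℤ, (∑ _k ∈ s, (1:ℚ)) = s.card := by
    intro s; rw [Finset.sum_const, nsmul_eq_mul, mul_one]
  have e2 : ∀ s : Finset ℕ, (∑ _k ∈ s, (1:ℚ)) = s.card := by
    intro s; rw [Finset.sum_const, nsmul_eq_mul, mul_one]
  rw [e1, e1, hplus, hminus, Finset.sum_filter] at *
  rw [← Finset.sum_filter, e2]
  ring

lemma T2rhs (n : ℕ) :
    coeff n (2 * X * Ex 8 psiS)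
      = 2 * ∑ c ∈ Finset.range (n+1), if (2*c+1)*(2*c+1) = n then (1:ℚ) else 0 := by
  rw [coeff_two_X_mul]
  by_cases hn : 1 ≤ n
  · rw [if_pos hn, coeff_Ex]
    by_cases h8 : 8 ∣ (n-1)
    · obtain ⟨t, ht⟩ := h8
      rw [if_pos ⟨t, ht⟩, psiS, coeff_mk]
      have htn : (n-1)/8 = t := by omega
      rw [htn, tric_ext (show t ≤ n by omega)]
      congr 1
      apply Finset.sum_congr rfl
      intro c _
      have hiff : (c*(c+1) = 2*t) ↔ ((2*c+1)*(2*c+1) = n) := by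
        set A := c*(c+1) with hA
        have hsq : (2*c+1)*(2*c+1) = 4*A + 1 := by rw [hA]; ring
        set B := (2*c+1)*(2*c+1) with hB
        omega
      simp only [hiff]
    · rw [if_neg h8, mul_zero]
      have hz : (∑ c ∈ Finset.range (n+1), if (2*c+1)*(2*c+1) = n then (1:ℚ) else 0) = 0 := by
        apply Finset.sum_eq_zero
        intro c _
        rw [if_neg]
        intro heq
        obtain ⟨w, hw⟩ := Nat.even_mul_succ_self c
        apply h8
        have hsq : (2*c+1)*(2*c+1) = 4*(c*(c+1)) + 1 := by ring
        rw [heq] at hsq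
        omega
      rw [hz]
      ring
  · rw [if_neg hn]
    have hn0 : n = 0 := by omega
    subst hn0
    have hz : (∑ c ∈ Finset.range (0+1), if (2*c+1)*(2*c+1) = 0 then (1:ℚ) else 0) = 0 := by
      apply Finset.sum_eq_zero
      intro c _
      rw [if_neg]
      intro heq
      rcases Nat.mul_eq_zero.1 heq with h | h <;> omega
    rw [hz]
    ring

/-- T2 -/
lemma T2 : phiS = Ex 4 phiS + 2 * X * Ex 8 psiS := by
  ext n
  rw [map_add, ← T2even, T2rhs, ← T2odd, phiS, coeff_mk, sqc,
    Finset.sum_filter_add_sum_filter_not]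

/-- uniqueness engine -/
lemma GU {k : ℕ} (hk : 2 ≤ k) (u v d : PowerSeries ℚ)
    (hu : constantCoeff u ≠ 0) (hd : constantCoeff d = 0)
    (heq : u * d = v * Ex k d) : d = 0 := by
  have key : ∀ n, (∀ m, m < n → coeff m d = 0) → coeff n d = 0 := by
    intro n ih
    rcases Nat.eq_zero_or_pos n with rfl | hn
    · rw [PowerSeries.coeff_zero_eq_constantCoeff]; exact hd
    have hL : coeff n (u * d) = constantCoeff u * coeff n d := by
      rw [PowerSeries.coeff_mul]
      rw [Finset.sum_eq_single (0, n)]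
      · rw [PowerSeries.coeff_zero_eq_constantCoeff]
      · rintro ⟨i, j⟩ hij hne
        rw [Finset.HasAntidiagonal.mem_antidiagonal] at hij
        have : j < n := by
          rcases Nat.eq_zero_or_pos i with rfl | hi
          · exact absurd (by simpa using hij) (by simpa using hne)
          · omega
        rw [ih j this]
        ring
      · intro hmem
        exact absurd (Finset.HasAntidiagonal.mem_antidiagonal.2 (by omega)) hmem
    have hR : coeff n (v * Ex k d) = 0 := by
      rw [PowerSeries.coeff_mul]
      apply Finset.sum_eq_zero
      rintro ⟨i, j⟩ hij
      rw [Finset.HasAntidiagonal.mem_antidiagonal] at hij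
      rw [coeff_Ex]
      split_ifs with hdvd
      · rw [ih (j/k) (by
          have : j / k ≤ n / k := Nat.div_le_div_right (by omega)
          have : n / k < n := Nat.div_lt_self (by omega) (by omega)
          omega)]
        ring
      · ring
    have := heq
    have h2 : coeff n (u * d) = coeff n (v * Ex k d) := by rw [this]
    rw [hL, hR] at h2
    exact (mul_eq_zero.1 h2).resolve_left hu
  ext n
  rw [map_zero]
  induction n using Nat.strong_induction_on with
  | _ n ih => exact key n ih


lemma Ex_sub (k : ℕ) (f g : PowerSeries ℚ) : Ex k (f - g) = Ex k f - Ex k g := by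
  ext n
  rw [map_sub, coeff_Ex, coeff_Ex, coeff_Ex]
  split_ifs with h
  · rw [map_sub]
  · rw [sub_zero]

lemma const_phiS : constantCoeff phiS = 1 := by
  rw [phiS, PowerSeries.constantCoeff_mk, sqc]
  norm_num

lemma const_phimS : constantCoeff phimS = 1 := by
  rw [phimS, PowerSeries.constantCoeff_mk, sqcm]
  norm_num [sgn]

lemma const_psiS : constantCoeff psiS = 1 := by
  rw [psiS, PowerSeries.constantCoeff_mk, tric]
  norm_num

lemma const_bS0 : constantCoeff (bS 0) = 1 := by
  rw [bS, PowerSeries.constantCoeff_mk]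
  norm_num
  rw [show pset 0 0 = {(∅, ∅)} from by decide]
  rfl

lemma ne_zero_of_const_one {f : PowerSeries ℚ} (h : constantCoeff f = 1) : f ≠ 0 := by
  intro h0
  rw [h0, map_zero] at h
  exact zero_ne_one h

lemma ne_zero_of_const {f : PowerSeries ℚ} (c : ℚ) (hc : constantCoeff f = c)
    (h : c ≠ 0) : f ≠ 0 := by
  intro h0
  rw [h0, map_zero] at hc
  exact h hc.symm

-- abbreviations
noncomputable def B : PowerSeries ℚ := PP 2 1 (-1)
noncomputable def A : PowerSeries ℚ := PP 2 1 1
noncomputable def Q1 : PowerSeries ℚ := PP 1 1 (-1)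
noncomputable def Q2 : PowerSeries ℚ := PP 2 2 (-1)
noncomputable def Q4 : PowerSeries ℚ := PP 4 4 (-1)
noncomputable def Q8 : PowerSeries ℚ := PP 8 8 (-1)
noncomputable def Q16 : PowerSeries ℚ := PP 16 16 (-1)

lemma cB : constantCoeff B = 1 := constantCoeff_PP 2 1 (by norm_num) (by norm_num) _
lemma cA : constantCoeff A = 1 := constantCoeff_PP 2 1 (by norm_num) (by norm_num) _
lemma cQ1 : constantCoeff Q1 = 1 := constantCoeff_PP 1 1 (by norm_num) (by norm_num) _
lemma cQ2 : constantCoeff Q2 = 1 := constantCoeff_PP 2 2 (by norm_num) (by norm_num) _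
lemma cQ4 : constantCoeff Q4 = 1 := constantCoeff_PP 4 4 (by norm_num) (by norm_num) _
lemma cQ8 : constantCoeff Q8 = 1 := constantCoeff_PP 8 8 (by norm_num) (by norm_num) _
lemma cQ16 : constantCoeff Q16 = 1 := constantCoeff_PP 16 16 (by norm_num) (by norm_num) _

lemma m1 : Q1 = B * Q2 := by
  have := PP_split 1 1 (by norm_num) (by norm_num) (-1)
  simpa [B, Q1, Q2, Q4, Q8, Q16] using this

lemma m2 : A * B = Ex 2 B := by
  have h1 := PP_conj 2 1 (by norm_num) (by norm_num)
  have h2 := Ex_PP 2 2 1 (by norm_num) (by norm_num) (by norm_num) (-1)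
  rw [A, B]
  rw [h1]
  norm_num at h2 ⊢
  rw [h2]

lemma E2Q1 : Ex 2 Q1 = Q2 := by
  have := Ex_PP 2 1 1 (by norm_num) (by norm_num) (by norm_num) (-1)
  simpa [B, Q1, Q2, Q4, Q8, Q16] using this
lemma E2Q2 : Ex 2 Q2 = Q4 := by
  have := Ex_PP 2 2 2 (by norm_num) (by norm_num) (by norm_num) (-1)
  simpa [B, Q1, Q2, Q4, Q8, Q16] using this
lemma E4Q1 : Ex 4 Q1 = Q4 := by
  have := Ex_PP 4 1 1 (by norm_num) (by norm_num) (by norm_num) (-1)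
  simpa [B, Q1, Q2, Q4, Q8, Q16] using this
lemma E4Q2 : Ex 4 Q2 = Q8 := by
  have := Ex_PP 4 2 2 (by norm_num) (by norm_num) (by norm_num) (-1)
  simpa [B, Q1, Q2, Q4, Q8, Q16] using this
lemma E4Q4 : Ex 4 Q4 = Q16 := by
  have := Ex_PP 4 4 4 (by norm_num) (by norm_num) (by norm_num) (-1)
  simpa [B, Q1, Q2, Q4, Q8, Q16] using this
lemma E8Q1 : Ex 8 Q1 = Q8 := by
  have := Ex_PP 8 1 1 (by norm_num) (by norm_num) (by norm_num) (-1)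
  simpa [B, Q1, Q2, Q4, Q8, Q16] using this
lemma E8Q2 : Ex 8 Q2 = Q16 := by
  have := Ex_PP 8 2 2 (by norm_num) (by norm_num) (by norm_num) (-1)
  simpa [B, Q1, Q2, Q4, Q8, Q16] using this

lemma cancel {a b c : PowerSeries ℚ} (ha : a ≠ 0) (h : a * b = a * c) : b = c :=
  mul_left_cancel₀ ha h

-- Step c1–c3 : E2 b0 = E2 B * b0
lemma c3 : Ex 2 (bS 0) = Ex 2 B * bS 0 := by
  have hJ2 : B * B = phimS * bS 0 := J2
  have hJ1 : A * A = phiS * bS 0 := J1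
  have s1 : Ex 2 B * Ex 2 B = Ex 2 phimS * Ex 2 (bS 0) := by
    rw [← Ex_mul 2 (by norm_num), ← Ex_mul 2 (by norm_num), hJ2]
  have s2 : Ex 2 B * Ex 2 B = (Ex 2 phimS * bS 0) * (Ex 2 phimS * bS 0) := by
    rw [← m2]
    calc A * B * (A * B) = (A * A) * (B * B) := by ring
    _ = (phiS * bS 0) * (phimS * bS 0) := by rw [hJ1, hJ2]
    _ = (phiS * phimS) * (bS 0 * bS 0) := by ring
    _ = (Ex 2 phimS * Ex 2 phimS) * (bS 0 * bS 0) := by rw [T5]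
    _ = (Ex 2 phimS * bS 0) * (Ex 2 phimS * bS 0) := by ring
  have hphim_ne : Ex 2 phimS ≠ 0 := by
    apply ne_zero_of_const_one
    rw [constantCoeff_Ex]
    exact const_phimS
  have c1 : Ex 2 (bS 0) = Ex 2 phimS * (bS 0 * bS 0) := by
    apply cancel hphim_ne
    calc Ex 2 phimS * Ex 2 (bS 0) = Ex 2 B * Ex 2 B := s1.symm
    _ = (Ex 2 phimS * bS 0) * (Ex 2 phimS * bS 0) := s2
    _ = Ex 2 phimS * (Ex 2 phimS * (bS 0 * bS 0)) := by ring
  -- sqrt step: E2 B = E2 phim * b0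
  have hsq : (Ex 2 B - Ex 2 phimS * bS 0) * (Ex 2 B + Ex 2 phimS * bS 0) = 0 := by
    have : Ex 2 B * Ex 2 B = (Ex 2 phimS * bS 0) * (Ex 2 phimS * bS 0) := s2
    linear_combination this
  have hsum_ne : Ex 2 B + Ex 2 phimS * bS 0 ≠ 0 := by
    apply ne_zero_of_const (c := 2)
    · rw [map_add, map_mul, constantCoeff_Ex, constantCoeff_Ex, cB, const_phimS, const_bS0]
      norm_num
    · norm_num
  have c2 : Ex 2 B = Ex 2 phimS * bS 0 := by
    rcases mul_eq_zero.1 hsq with h | h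
    · linear_combination h
    · exact absurd h hsum_ne
  calc Ex 2 (bS 0) = Ex 2 phimS * (bS 0 * bS 0) := c1
  _ = (Ex 2 phimS * bS 0) * bS 0 := by ring
  _ = Ex 2 B * bS 0 := by rw [← c2]

-- Step c4 : b0 * Q2 = 1
lemma c4 : bS 0 * Q2 = 1 := by
  have hu : Ex 2 (bS 0 * Q2) = bS 0 * Q2 := by
    rw [Ex_mul 2 (by norm_num), c3, E2Q2]
    have : Ex 2 B * Q4 = Q2 := by
      have h1 : Ex 2 B * Ex 2 Q2 = Ex 2 Q1 := by
        rw [← Ex_mul 2 (by norm_num), ← m1]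
      rw [E2Q2, E2Q1] at h1
      exact h1
    calc Ex 2 B * bS 0 * Q4 = (Ex 2 B * Q4) * bS 0 := by ring
    _ = Q2 * bS 0 := by rw [this]
    _ = bS 0 * Q2 := by ring
  have hd : constantCoeff (bS 0 * Q2 - 1) = 0 := by
    rw [map_sub, map_mul, const_bS0, cQ2, map_one]
    norm_num
  have heq : (1 : PowerSeries ℚ) * (bS 0 * Q2 - 1) = 1 * Ex 2 (bS 0 * Q2 - 1) := by
    rw [Ex_sub, Ex_one 2 (by norm_num), hu]
  have := GU (k := 2) le_rfl 1 1 _ (by rw [map_one]; norm_num) hd heq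
  linear_combination this

-- bridges
lemma c5 : phiS = A * A * Q2 := by
  have hJ1 : A * A = phiS * bS 0 := J1
  calc phiS = phiS * 1 := by ring
  _ = phiS * (bS 0 * Q2) := by rw [c4]
  _ = (phiS * bS 0) * Q2 := by ring
  _ = (A * A) * Q2 := by rw [← hJ1]

lemma c6 : A * Q4 * Q1 = Q2 * Q2 := by
  have h1 : Ex 2 B * Q4 = Q2 := by
    have h : Ex 2 B * Ex 2 Q2 = Ex 2 Q1 := by
      rw [← Ex_mul 2 (by norm_num), ← m1]
    rw [E2Q2, E2Q1] at h
    exact h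
  calc A * Q4 * Q1 = A * Q4 * (B * Q2) := by rw [← m1]
  _ = (A * B) * Q4 * Q2 := by ring
  _ = Ex 2 B * Q4 * Q2 := by rw [m2]
  _ = Q2 * Q2 := by rw [h1]

lemma Bphi : phiS * (Q1 * Q1 * (Q4 * Q4)) = Q2 * Q2 * Q2 * Q2 * Q2 := by
  calc phiS * (Q1 * Q1 * (Q4 * Q4)) = (A * A * Q2) * (Q1 * Q1 * (Q4 * Q4)) := by rw [← c5]
  _ = (A * Q4 * Q1) * (A * Q4 * Q1) * Q2 := by ring
  _ = (Q2 * Q2) * (Q2 * Q2) * Q2 := by rw [c6]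
  _ = Q2 * Q2 * Q2 * Q2 * Q2 := by ring

lemma Bpsi : psiS * Q1 = Q2 * Q2 := by
  set s := psiS * Q1 with hs
  set t := Q2 * Q2 with ht
  have hseq : s * s * (Q4 * Q4) = (Q2 * Q2 * Q2 * Q2) * Ex 2 s := by
    have hE2s : Ex 2 s = Ex 2 psiS * Q2 := by
      rw [hs, Ex_mul 2 (by norm_num), E2Q1]
    calc s * s * (Q4 * Q4) = (psiS * psiS) * (Q1 * Q1 * (Q4 * Q4)) := by rw [hs]; ring
    _ = (phiS * Ex 2 psiS) * (Q1 * Q1 * (Q4 * Q4)) := by rw [T1]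
    _ = (phiS * (Q1 * Q1 * (Q4 * Q4))) * Ex 2 psiS := by ring
    _ = (Q2 * Q2 * Q2 * Q2 * Q2) * Ex 2 psiS := by rw [Bphi]
    _ = (Q2 * Q2 * Q2 * Q2) * (Ex 2 psiS * Q2) := by ring
    _ = (Q2 * Q2 * Q2 * Q2) * Ex 2 s := by rw [← hE2s]
  have hteq : t * t * (Q4 * Q4) = (Q2 * Q2 * Q2 * Q2) * Ex 2 t := by
    rw [ht, Ex_mul 2 (by norm_num), E2Q2]
    ring
  have hd0 : constantCoeff (s - t) = 0 := by
    rw [map_sub, hs, ht, map_mul, map_mul, const_psiS, cQ1, cQ2]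
    norm_num
  have hkey : ((s + t) * (Q4 * Q4)) * (s - t) = (Q2 * Q2 * Q2 * Q2) * Ex 2 (s - t) := by
    rw [Ex_sub]
    linear_combination hseq - hteq
  have hcs : constantCoeff s = 1 := by
    rw [hs, map_mul, const_psiS, cQ1]; norm_num
  have hct : constantCoeff t = 1 := by
    rw [ht, map_mul, cQ2]; norm_num
  have hu_ne : constantCoeff ((s + t) * (Q4 * Q4)) ≠ 0 := by
    rw [map_mul, map_add, hcs, hct, map_mul, cQ4]
    norm_num
  have := GU (k := 2) le_rfl _ _ _ hu_ne hd0 hkey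
  linear_combination this

-- the main multiplicative identity (E)
lemma mainE : Q2^5 * Q8 * Q16^2 = Q1^2 * Q8^6 + 2 * X * (Q1^2 * Q4^2 * Q16^4) := by
  have hT2 : phiS = Ex 4 phiS + 2 * X * Ex 8 psiS := T2
  -- E4 of Bphi
  have c7 : Ex 4 phiS * (Q4 * Q4 * (Q16 * Q16)) = Q8 * Q8 * Q8 * Q8 * Q8 := by
    have := congrArg (Ex 4) Bphi
    rw [Ex_mul 4 (by norm_num), Ex_mul 4 (by norm_num), Ex_mul 4 (by norm_num),
      Ex_mul 4 (by norm_num), Ex_mul 4 (by norm_num), Ex_mul 4 (by norm_num),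
      Ex_mul 4 (by norm_num), Ex_mul 4 (by norm_num), E4Q1, E4Q4, E4Q2] at this
    exact this
  have c8 : Ex 8 psiS * Q8 = Q16 * Q16 := by
    have := congrArg (Ex 8) Bpsi
    rw [Ex_mul 8 (by norm_num), Ex_mul 8 (by norm_num), E8Q1, E8Q2] at this
    exact this
  have hM := congrArg (· * (Q1^2 * Q4^2 * Q8 * Q16^2)) hT2
  calc Q2^5 * Q8 * Q16^2
      = phiS * (Q1^2 * Q4^2 * Q8 * Q16^2) := by
        linear_combination (-(Q8 * Q16^2) : PowerSeries ℚ) * Bphi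
  _ = (Ex 4 phiS + 2 * X * Ex 8 psiS) * (Q1^2 * Q4^2 * Q8 * Q16^2) := by rw [hM]
  _ = (Ex 4 phiS * (Q4 * Q4 * (Q16 * Q16))) * (Q1^2 * Q8) + 2 * X * ((Ex 8 psiS * Q8) * (Q1^2 * Q4^2 * Q16^2)) := by
        ring
  _ = (Q8 * Q8 * Q8 * Q8 * Q8) * (Q1^2 * Q8) + 2 * X * ((Q16 * Q16) * (Q1^2 * Q4^2 * Q16^2)) := by
        rw [c7, c8]
  _ = Q1^2 * Q8^6 + 2 * X * (Q1^2 * Q4^2 * Q16^4) := by ring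

-- translate back to fQ
lemma mainE' : fQ 2^5 * fQ 8 * fQ 16^2
    = fQ 1^2 * fQ 8^6 + 2 * X * (fQ 1^2 * fQ 4^2 * fQ 16^4) := by
  rw [fQ_eq_PP 1, fQ_eq_PP 2, fQ_eq_PP 4, fQ_eq_PP 8, fQ_eq_PP 16]
  exact mainE

lemma const_fQ (m : ℕ) (hm : 1 ≤ m) : constantCoeff (fQ m) = 1 := by
  rw [fQ_eq_PP]
  exact constantCoeff_PP m m hm hm _

theorem final :
    (fQ 1 ^ 2)⁻¹
      = fQ 8 ^ 5 * (fQ 2 ^ 5 * fQ 16 ^ 2)⁻¹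
        + 2 * PowerSeries.X * (fQ 4 ^ 2 * fQ 16 ^ 2 * (fQ 2 ^ 5 * fQ 8)⁻¹) := by
  have h1 : constantCoeff (fQ 1 ^ 2) ≠ 0 := by
    simp only [map_pow, const_fQ 1 (by norm_num)]; norm_num
  have hP : constantCoeff (fQ 2 ^ 5 * fQ 16 ^ 2) ≠ 0 := by
    simp only [map_mul, map_pow, const_fQ 2 (by norm_num), const_fQ 16 (by norm_num)]; norm_num
  have hR : constantCoeff (fQ 2 ^ 5 * fQ 8) ≠ 0 := by
    simp only [map_mul, map_pow, const_fQ 2 (by norm_num), const_fQ 8 (by norm_num)]; norm_num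
  rw [PowerSeries.inv_eq_iff_mul_eq_one h1]
  have hPinv : (fQ 2 ^ 5 * fQ 16 ^ 2) * (fQ 2 ^ 5 * fQ 16 ^ 2)⁻¹ = 1 :=
    PowerSeries.mul_inv_cancel _ hP
  have hRinv : (fQ 2 ^ 5 * fQ 8) * (fQ 2 ^ 5 * fQ 8)⁻¹ = 1 :=
    PowerSeries.mul_inv_cancel _ hR
  have hPR_ne : (fQ 2 ^ 5 * fQ 16 ^ 2) * (fQ 2 ^ 5 * fQ 8) ≠ 0 := by
    apply ne_zero_of_const_one
    simp only [map_mul, map_pow, const_fQ 2 (by norm_num), const_fQ 16 (by norm_num),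
      const_fQ 8 (by norm_num)]
    norm_num
  apply cancel hPR_ne
  rw [mul_one]
  calc (fQ 2 ^ 5 * fQ 16 ^ 2) * (fQ 2 ^ 5 * fQ 8)
      * ((fQ 8 ^ 5 * (fQ 2 ^ 5 * fQ 16 ^ 2)⁻¹
        + 2 * PowerSeries.X * (fQ 4 ^ 2 * fQ 16 ^ 2 * (fQ 2 ^ 5 * fQ 8)⁻¹)) * fQ 1 ^ 2)
      = ((fQ 2 ^ 5 * fQ 16 ^ 2) * (fQ 2 ^ 5 * fQ 16 ^ 2)⁻¹) * (fQ 8 ^ 5 * (fQ 2 ^ 5 * fQ 8) * fQ 1 ^ 2)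
        + ((fQ 2 ^ 5 * fQ 8) * (fQ 2 ^ 5 * fQ 8)⁻¹)
          * (2 * PowerSeries.X * (fQ 4 ^ 2 * fQ 16 ^ 2 * (fQ 2 ^ 5 * fQ 16 ^ 2) * fQ 1 ^ 2)) := by
        ring
  _ = fQ 8 ^ 5 * (fQ 2 ^ 5 * fQ 8) * fQ 1 ^ 2
        + 2 * PowerSeries.X * (fQ 4 ^ 2 * fQ 16 ^ 2 * (fQ 2 ^ 5 * fQ 16 ^ 2) * fQ 1 ^ 2) := by
        rw [hPinv, hRinv]; ring
  _ = (fQ 2 ^ 5 * fQ 16 ^ 2) * (fQ 2 ^ 5 * fQ 8) := by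
        linear_combination (-(fQ 2^5) : PowerSeries ℚ) * mainE'


end Diss

theorem f1_sq_inv_dissection :
    (fQ 1 ^ 2)⁻¹
      = fQ 8 ^ 5 * (fQ 2 ^ 5 * fQ 16 ^ 2)⁻¹
        + 2 * PowerSeries.X * (fQ 4 ^ 2 * fQ 16 ^ 2 * (fQ 2 ^ 5 * fQ 8)⁻¹) :=
  Diss.final
end

section
/- If a, b, c, d are formal variables with ab = cd, then f(a,b) f(c,d) = f(ac, bd) f(ad, bc) + a · f(b/c, ac^2 d) f(b/d, a c d^2), where f(x,y) = Σ_{n∈ℤ} x^{n(n+1)/2} y^{n(n-1)/2}. -/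
open scoped BigOperators

/-- Ramanujan's general theta function `f(a,b) = ∑_{n ∈ ℤ} a^{n(n+1)/2} b^{n(n-1)/2}`.
Note that `n(n+1)/2` and `n(n-1)/2` are nonnegative integers for every `n : ℤ`. -/
noncomputable def ramTheta (a b : ℂ) : ℂ :=
  ∑' n : ℤ, a ^ ((n * (n + 1)) / 2).toNat * b ^ ((n * (n - 1)) / 2).toNat

namespace Entry29

/-- `T n = n(n+1)/2` as a natural number. -/
def T (n : ℤ) : ℕ := ((n * (n + 1)) / 2).toNat

/-- `S n = n(n-1)/2` as a natural number. -/
def S (n : ℤ) : ℕ := ((n * (n - 1)) / 2).toNat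

/-- The general term of Ramanujan's theta function. -/
noncomputable def F (a b : ℂ) (n : ℤ) : ℂ := a ^ T n * b ^ S n

lemma ramTheta_eq (a b : ℂ) : ramTheta a b = ∑' n : ℤ, F a b n := rfl

lemma two_T (n : ℤ) : 2 * (T n : ℤ) = n * (n + 1) := by
  have h0 : 0 ≤ n * (n + 1) := by nlinarith [sq_nonneg (2 * n + 1)]
  have he : n * (n + 1) % 2 = 0 := Int.even_iff.mp (Int.even_mul_succ_self n)
  unfold T; omega

lemma two_S (n : ℤ) : 2 * (S n : ℤ) = n * (n - 1) := by
  have h0 : 0 ≤ n * (n - 1) := by nlinarith [sq_nonneg (2 * n - 1)]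
  have he : n * (n - 1) % 2 = 0 := by
    have h := Int.even_iff.mp (Int.even_mul_succ_self (n - 1))
    have : (n - 1) * (n - 1 + 1) = n * (n - 1) := by ring
    omega
  unfold S; omega

lemma T_neg (n : ℤ) : T (-n) = S n := by
  unfold T S
  rw [show (-n) * (-n + 1) = n * (n - 1) by ring]

lemma S_neg (n : ℤ) : S (-n) = T n := by
  unfold T S
  rw [show (-n) * (-n - 1) = n * (n + 1) by ring]

lemma key_pow_nat {a b c d : ℂ} (h : a * b = c * d) (q1 q2 p3 p4 E : ℕ) :
    a ^ (q1 + E) * b ^ (q2 + E) * c ^ p3 * d ^ p4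
      = a ^ q1 * b ^ q2 * c ^ (p3 + E) * d ^ (p4 + E) := by
  have key : a ^ E * b ^ E = c ^ E * d ^ E := by rw [← mul_pow, ← mul_pow, h]
  linear_combination (a ^ q1 * b ^ q2 * c ^ p3 * d ^ p4) * key

lemma key_pow {a b c d : ℂ} (h : a * b = c * d) {p1 p2 p3 p4 q1 q2 q3 q4 : ℕ} (e : ℤ)
    (h1 : (p1 : ℤ) = q1 + e) (h2 : (p2 : ℤ) = q2 + e)
    (h3 : (q3 : ℤ) = p3 + e) (h4 : (q4 : ℤ) = p4 + e) :
    a ^ p1 * b ^ p2 * c ^ p3 * d ^ p4 = a ^ q1 * b ^ q2 * c ^ q3 * d ^ q4 := by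
  rcases le_or_gt 0 e with he | he
  · obtain ⟨E, rfl⟩ : ∃ E : ℕ, e = (E : ℤ) := ⟨e.toNat, (Int.toNat_of_nonneg he).symm⟩
    obtain rfl : p1 = q1 + E := by omega
    obtain rfl : p2 = q2 + E := by omega
    obtain rfl : q3 = p3 + E := by omega
    obtain rfl : q4 = p4 + E := by omega
    exact key_pow_nat h q1 q2 p3 p4 E
  · obtain ⟨E, rfl⟩ : ∃ E : ℕ, e = -(E : ℤ) := ⟨(-e).toNat, by omega⟩
    obtain rfl : q1 = p1 + E := by omega
    obtain rfl : q2 = p2 + E := by omega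
    obtain rfl : p3 = q3 + E := by omega
    obtain rfl : p4 = q4 + E := by omega
    exact (key_pow_nat h p1 p2 q3 q4 E).symm

lemma even_term {a b c d : ℂ} (h : a * b = c * d) (k l : ℤ) :
    F a b (k + l) * F c d (k - l) = F (a * c) (b * d) k * F (a * d) (b * c) l := by
  have e1 : F a b (k + l) * F c d (k - l)
      = a ^ T (k + l) * b ^ S (k + l) * c ^ T (k - l) * d ^ S (k - l) := by
    unfold F; ring
  have e2 : F (a * c) (b * d) k * F (a * d) (b * c) l
      = a ^ (T k + T l) * b ^ (S k + S l) * c ^ (T k + S l) * d ^ (S k + T l) := by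
    unfold F; ring
  rw [e1, e2]
  refine key_pow h (k * l) ?_ ?_ ?_ ?_
  · have A : 2 * ((T (k + l) : ℤ)) = 2 * (((T k + T l : ℕ) : ℤ) + k * l) := by
      push_cast
      linear_combination two_T (k + l) - two_T k - two_T l
    linarith
  · have A : 2 * ((S (k + l) : ℤ)) = 2 * (((S k + S l : ℕ) : ℤ) + k * l) := by
      push_cast
      linear_combination two_S (k + l) - two_S k - two_S l
    linarith
  · have A : 2 * (((T k + S l : ℕ)) : ℤ) = 2 * (((T (k - l) : ℕ) : ℤ) + k * l) := by
      push_cast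
      linear_combination two_T k + two_S l - two_T (k - l)
    linarith
  · have A : 2 * (((S k + T l : ℕ)) : ℤ) = 2 * (((S (k - l) : ℕ) : ℤ) + k * l) := by
      push_cast
      linear_combination two_S k + two_T l - two_S (k - l)
    linarith

lemma odd_term {a b c d : ℂ} (h : a * b = c * d) (hc : c ≠ 0) (hd : d ≠ 0) (i j : ℤ) :
    F a b (1 - i - j) * F c d (j - i)
      = a * (F (b / c) (a * c ^ 2 * d) i * F (b / d) (a * c * d ^ 2) j) := by
  have hcp : c ^ T i ≠ 0 := pow_ne_zero _ hc
  have hdp : d ^ T j ≠ 0 := pow_ne_zero _ hd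
  apply mul_right_cancel₀ (mul_ne_zero hcp hdp)
  have e1 : F a b (1 - i - j) * F c d (j - i) * (c ^ T i * d ^ T j)
      = a ^ T (1 - i - j) * b ^ S (1 - i - j) * c ^ (T (j - i) + T i) * d ^ (S (j - i) + T j) := by
    unfold F; ring
  have e2 : a * (F (b / c) (a * c ^ 2 * d) i * F (b / d) (a * c * d ^ 2) j)
        * (c ^ T i * d ^ T j)
      = a ^ (1 + S i + S j) * b ^ (T i + T j) * c ^ (2 * S i + S j) * d ^ (S i + 2 * S j) := by
    unfold F
    rw [div_pow, div_pow]
    field_simp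
    ring
  rw [e1, e2]
  refine key_pow h (i * j - i - j) ?_ ?_ ?_ ?_
  · have A : 2 * ((T (1 - i - j) : ℤ))
        = 2 * (((1 + S i + S j : ℕ) : ℤ) + (i * j - i - j)) := by
      push_cast
      linear_combination two_T (1 - i - j) - two_S i - two_S j
    linarith
  · have A : 2 * ((S (1 - i - j) : ℤ))
        = 2 * (((T i + T j : ℕ) : ℤ) + (i * j - i - j)) := by
      push_cast
      linear_combination two_S (1 - i - j) - two_T i - two_T j
    linarith
  · have A : 2 * (((2 * S i + S j : ℕ)) : ℤ)
        = 2 * (((T (j - i) + T i : ℕ) : ℤ) + (i * j - i - j)) := by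
      push_cast
      linear_combination 2 * two_S i + two_S j - two_T (j - i) - two_T i
    linarith
  · have A : 2 * (((S i + 2 * S j : ℕ)) : ℤ)
        = 2 * (((S (j - i) + T j : ℕ) : ℤ) + (i * j - i - j)) := by
      push_cast
      linear_combination two_S i + 2 * two_S j - two_S (j - i) - two_T j
    linarith

lemma F_norm (a b : ℂ) (n : ℤ) : ‖F a b n‖ = ‖a‖ ^ T n * ‖b‖ ^ S n := by
  unfold F; rw [norm_mul, norm_pow, norm_pow]

lemma T_succ (n : ℕ) : T ((n : ℤ) + 1) = T (n : ℤ) + (n + 1) := by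
  have A : 2 * ((T ((n : ℤ) + 1)) : ℤ) = 2 * (((T (n : ℤ) + (n + 1) : ℕ)) : ℤ) := by
    push_cast
    linear_combination two_T ((n : ℤ) + 1) - two_T (n : ℤ)
  omega

lemma S_succ (n : ℕ) : S ((n : ℤ) + 1) = S (n : ℤ) + n := by
  have A : 2 * ((S ((n : ℤ) + 1)) : ℤ) = 2 * (((S (n : ℤ) + n : ℕ)) : ℤ) := by
    push_cast
    linear_combination two_S ((n : ℤ) + 1) - two_S (n : ℤ)
  omega

lemma summable_nat {a b : ℂ} (hab : ‖a‖ * ‖b‖ < 1) :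
    Summable fun n : ℕ => ‖F a b (n : ℤ)‖ := by
  have hq0 : 0 ≤ ‖a‖ * ‖b‖ := by positivity
  have htend : Filter.Tendsto (fun n : ℕ => (‖a‖ * ‖b‖) ^ n * ‖a‖)
      Filter.atTop (nhds 0) := by
    simpa using (tendsto_pow_atTop_nhds_zero_of_lt_one hq0 hab).mul_const ‖a‖
  apply summable_of_ratio_norm_eventually_le (r := 1 / 2) (by norm_num)
  filter_upwards [htend.eventually
    (eventually_le_nhds (by norm_num : (0 : ℝ) < 1 / 2))] with n hn
  have key : ‖F a b ((n + 1 : ℕ) : ℤ)‖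
      = ((‖a‖ * ‖b‖) ^ n * ‖a‖) * ‖F a b (n : ℤ)‖ := by
    rw [F_norm, F_norm, show ((n + 1 : ℕ) : ℤ) = (n : ℤ) + 1 by push_cast; ring,
      T_succ, S_succ, pow_add, pow_add, mul_pow]
    ring
  rw [Real.norm_of_nonneg (norm_nonneg _), Real.norm_of_nonneg (norm_nonneg _), key]
  exact mul_le_mul_of_nonneg_right hn (norm_nonneg _)

lemma summable_norm {a b : ℂ} (hab : ‖a‖ * ‖b‖ < 1) :
    Summable fun n : ℤ => ‖F a b n‖ := by
  apply Summable.of_nat_of_neg (f := fun n : ℤ => ‖F a b n‖) (summable_nat hab)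
  have hba : ‖b‖ * ‖a‖ < 1 := by rwa [mul_comm]
  refine (summable_nat hba).congr fun n => ?_
  rw [F_norm, F_norm, T_neg, S_neg]
  ring

lemma summable_F {a b : ℂ} (hab : ‖a‖ * ‖b‖ < 1) : Summable (F a b) :=
  (summable_norm hab).of_norm

/-- The set of pairs with even coordinate-sum. -/
def sE : Set (ℤ × ℤ) := {p | (p.1 + p.2) % 2 = 0}

/-- Parametrization of pairs with even coordinate-sum. -/
def eEven : (ℤ × ℤ) ≃ sE where
  toFun kl := ⟨(kl.1 + kl.2, kl.1 - kl.2), by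
    simp only [sE, Set.mem_setOf_eq]; omega⟩
  invFun p := ((p.1.1 + p.1.2) / 2, (p.1.1 - p.1.2) / 2)
  left_inv kl := by
    ext
    · show (kl.1 + kl.2 + (kl.1 - kl.2)) / 2 = kl.1; omega
    · show (kl.1 + kl.2 - (kl.1 - kl.2)) / 2 = kl.2; omega
  right_inv p := by
    have hp : (p.1.1 + p.1.2) % 2 = 0 := p.2
    apply Subtype.ext
    ext
    · show (p.1.1 + p.1.2) / 2 + (p.1.1 - p.1.2) / 2 = p.1.1; omega
    · show (p.1.1 + p.1.2) / 2 - (p.1.1 - p.1.2) / 2 = p.1.2; omega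

/-- Parametrization of pairs with odd coordinate-sum. -/
def eOdd : (ℤ × ℤ) ≃ ↑(sEᶜ) where
  toFun ij := ⟨(1 - ij.1 - ij.2, ij.2 - ij.1), by
    simp only [sE, Set.mem_compl_iff, Set.mem_setOf_eq]; omega⟩
  invFun p := ((1 - p.1.1 - p.1.2) / 2, (1 - p.1.1 + p.1.2) / 2)
  left_inv ij := by
    ext
    · show (1 - (1 - ij.1 - ij.2) - (ij.2 - ij.1)) / 2 = ij.1; omega
    · show (1 - (1 - ij.1 - ij.2) + (ij.2 - ij.1)) / 2 = ij.2; omega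
  right_inv p := by
    have hp : ¬(p.1.1 + p.1.2) % 2 = 0 := p.2
    apply Subtype.ext
    ext
    · show 1 - (1 - p.1.1 - p.1.2) / 2 - (1 - p.1.1 + p.1.2) / 2 = p.1.1; omega
    · show (1 - p.1.1 + p.1.2) / 2 - (1 - p.1.1 - p.1.2) / 2 = p.1.2; omega

end Entry29

open Entry29 in
theorem ramTheta_entry29 (a b c d : ℂ) (h : a * b = c * d) (hab : ‖a * b‖ < 1)
    (hc : c ≠ 0) (hd : d ≠ 0) :
    ramTheta a b * ramTheta c d
      = ramTheta (a * c) (b * d) * ramTheta (a * d) (b * c)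
        + a * ramTheta (b / c) (a * c ^ 2 * d) * ramTheta (b / d) (a * c * d ^ 2) := by
  have hq : ‖a‖ * ‖b‖ < 1 := by rwa [← norm_mul]
  have hq0 : 0 ≤ ‖a‖ * ‖b‖ := by positivity
  have hcd : ‖c‖ * ‖d‖ < 1 := by
    rw [← norm_mul, ← h, norm_mul]; exact hq
  have hcd0 : 0 ≤ ‖c‖ * ‖d‖ := by positivity
  have hsq : (‖a‖ * ‖b‖) * (‖c‖ * ‖d‖) < 1 := by nlinarith
  -- norm bounds for the four theta functions on the right
  have h1 : ‖a * c‖ * ‖b * d‖ < 1 := by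
    rw [norm_mul, norm_mul]
    calc ‖a‖ * ‖c‖ * (‖b‖ * ‖d‖) = (‖a‖ * ‖b‖) * (‖c‖ * ‖d‖) := by ring
      _ < 1 := hsq
  have h2 : ‖a * d‖ * ‖b * c‖ < 1 := by
    rw [norm_mul, norm_mul]
    calc ‖a‖ * ‖d‖ * (‖b‖ * ‖c‖) = (‖a‖ * ‖b‖) * (‖c‖ * ‖d‖) := by ring
      _ < 1 := hsq
  have h3 : ‖b / c‖ * ‖a * c ^ 2 * d‖ < 1 := by
    have e : b / c * (a * c ^ 2 * d) = (a * b) * (a * b) := by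
      have e' : b / c * (a * c ^ 2 * d) = (a * b) * (c * d) := by field_simp
      rw [e', ← h]
    rw [← norm_mul, e, norm_mul]
    nlinarith [norm_nonneg (a * b)]
  have h4 : ‖b / d‖ * ‖a * c * d ^ 2‖ < 1 := by
    have e : b / d * (a * c * d ^ 2) = (a * b) * (a * b) := by
      have e' : b / d * (a * c * d ^ 2) = (a * b) * (c * d) := by field_simp
      rw [e', ← h]
    rw [← norm_mul, e, norm_mul]
    nlinarith [norm_nonneg (a * b)]
  -- the double-sum form of the left-hand side
  have hG : Summable (fun p : ℤ × ℤ => F a b p.1 * F c d p.2) :=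
    summable_mul_of_summable_norm (summable_norm hq) (summable_norm hcd)
  have hLHS : ramTheta a b * ramTheta c d
      = ∑' p : ℤ × ℤ, F a b p.1 * F c d p.2 := by
    rw [ramTheta_eq, ramTheta_eq]
    exact tsum_mul_tsum_of_summable_norm (summable_norm hq) (summable_norm hcd)
  -- split the double sum according to the parity of the coordinate-sum
  have hsplit : (∑' x : sE, F a b (x : ℤ × ℤ).1 * F c d (x : ℤ × ℤ).2)
        + (∑' x : ↑(sEᶜ), F a b (x : ℤ × ℤ).1 * F c d (x : ℤ × ℤ).2)
      = ∑' p : ℤ × ℤ, F a b p.1 * F c d p.2 :=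
    hG.tsum_subtype_add_tsum_subtype_compl sE
  -- even part
  have heven : (∑' x : sE, F a b (x : ℤ × ℤ).1 * F c d (x : ℤ × ℤ).2)
      = ramTheta (a * c) (b * d) * ramTheta (a * d) (b * c) := by
    rw [← eEven.tsum_eq (fun x : sE => F a b (x : ℤ × ℤ).1 * F c d (x : ℤ × ℤ).2)]
    have : ∀ kl : ℤ × ℤ,
        F a b ((eEven kl : ℤ × ℤ)).1 * F c d ((eEven kl : ℤ × ℤ)).2
          = F (a * c) (b * d) kl.1 * F (a * d) (b * c) kl.2 := by
      intro kl
      exact even_term h kl.1 kl.2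
    rw [tsum_congr this, ramTheta_eq, ramTheta_eq]
    exact (tsum_mul_tsum_of_summable_norm (summable_norm h1) (summable_norm h2)).symm
  -- odd part
  have hodd : (∑' x : ↑(sEᶜ), F a b (x : ℤ × ℤ).1 * F c d (x : ℤ × ℤ).2)
      = a * ramTheta (b / c) (a * c ^ 2 * d) * ramTheta (b / d) (a * c * d ^ 2) := by
    rw [← eOdd.tsum_eq (fun x : ↑(sEᶜ) => F a b (x : ℤ × ℤ).1 * F c d (x : ℤ × ℤ).2)]
    have : ∀ ij : ℤ × ℤ,
        F a b ((eOdd ij : ℤ × ℤ)).1 * F c d ((eOdd ij : ℤ × ℤ)).2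
          = a * (F (b / c) (a * c ^ 2 * d) ij.1 * F (b / d) (a * c * d ^ 2) ij.2) := by
      intro ij
      exact odd_term h hc hd ij.1 ij.2
    rw [tsum_congr this, tsum_mul_left, ramTheta_eq, ramTheta_eq,
      ← tsum_mul_tsum_of_summable_norm (summable_norm h3) (summable_norm h4)]
    ring
  rw [hLHS, ← hsplit, heven, hodd]
end
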